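/- arXiv:2109.07333 — 11 statements merged into one kernel-verified Lean document; each statement's English description precedes it below -/
import Mathlib

section
/- The generating function S(X) of the large Schröder numbers, defined as the unique formal power series u with u(0) = 1 satisfying u = 1/(1 - X - X·u), satisfies the equation X·u^2 + (X - 1)·u + 1 = 0, and its n-th coefficient equals Σ_{k=0}^{n} binomial(n+k, 2k) · C_k, where C_k is the k-th Catalan number. -/
open PowerSeries Finset

private noncomputable def w : ℚ⟦X⟧ := PowerSeries.mk fun _ => 1

private lemma hw : (1 - X) * w = 1 := by
  ext n
  cases n with
  | zero => simp [w]
  | succ m => simp [w, sub_mul, coeff_succ_X_mul]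

private lemma coeff_w_pow (m n : ℕ) :
    coeff n (w ^ (m + 1)) = ((n + m).choose m : ℚ) := by
  induction m generalizing n with
  | zero => simp [w]
  | succ m ih =>
    rw [pow_succ, coeff_mul]
    rw [Finset.Nat.sum_antidiagonal_eq_sum_range_succ_mk]
    have : ∀ i ∈ range (n + 1),
        coeff i (w ^ (m + 1)) * coeff (n - i) w = ((i + m).choose m : ℚ) := by
      intro i _
      rw [ih, show coeff (n - i) w = 1 from coeff_mk _ _, mul_one]
    rw [Finset.sum_congr rfl this, ← Nat.cast_sum, Nat.sum_range_add_choose]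
    norm_cast

private lemma key (c : ℚ) (j m n : ℕ) :
    coeff n (C c * w ^ (m + 1) * X ^ j) =
      if j ≤ n then c * ((n - j + m).choose m : ℚ) else 0 := by
  rw [coeff_mul_X_pow']
  split_ifs with hj
  · rw [coeff_C_mul, coeff_w_pow]
  · rfl

private noncomputable def G (N : ℕ) : ℚ⟦X⟧ :=
  ∑ k ∈ range (N + 1), C (catalan k : ℚ) * w ^ (2 * k + 1) * X ^ k

private def T (n : ℕ) : ℚ :=
  ∑ k ∈ Finset.range (n + 1), (Nat.choose (n + k) (2 * k) : ℚ) * (catalan k : ℚ)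

private lemma coeff_G {n N : ℕ} (h : n ≤ N) : coeff n (G N) = T n := by
  rw [G, map_sum]
  have h1 : ∀ k ∈ range (N + 1),
      coeff n (C (catalan k : ℚ) * w ^ (2 * k + 1) * X ^ k) =
      if k ≤ n then ((n + k).choose (2 * k) : ℚ) * (catalan k : ℚ) else 0 := by
    intro k _
    rw [key]
    split_ifs with hk
    · rw [mul_comm, show n - k + 2 * k = n + k by omega]
    · rfl
  rw [Finset.sum_congr rfl h1, T]
  rw [← Finset.sum_subset (Finset.range_subset_range.2 (by omega) : range (n + 1) ⊆ range (N + 1))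
    (fun k _ hk => if_neg (by simp only [mem_range] at hk; omega))]
  exact Finset.sum_congr rfl fun k hk => if_pos (by simp only [mem_range] at hk; omega)


private lemma sumlemma {n N : ℕ} (g : ℕ → ℚ) (hg : ∀ m, n ≤ m → g m = 0) (hn : n ≤ N) :
    ∑ k ∈ range N, (catalan (k + 1) : ℚ) * g k =
      ∑ a ∈ range (N + 1), ∑ b ∈ range (N + 1),
        (catalan a : ℚ) * (catalan b : ℚ) * g (a + b) := by
  rw [← Finset.sum_product']
  set Tri : Finset (ℕ × ℕ) := (range n).biUnion (fun k => Finset.HasAntidiagonal.antidiagonal k) with hTri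
  have hsub : Tri ⊆ range (N + 1) ×ˢ range (N + 1) := by
    intro p hp
    rw [hTri, Finset.mem_biUnion] at hp
    obtain ⟨k, hk, hpk⟩ := hp
    rw [Finset.mem_range] at hk
    rw [Finset.HasAntidiagonal.mem_antidiagonal] at hpk
    rw [Finset.mem_product, Finset.mem_range, Finset.mem_range]
    omega
  have hvan : ∀ p ∈ range (N + 1) ×ˢ range (N + 1), p ∉ Tri →
      (catalan p.1 : ℚ) * (catalan p.2 : ℚ) * g (p.1 + p.2) = 0 := by
    intro p _ hp
    have hge : n ≤ p.1 + p.2 := by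
      by_contra hlt
      exact hp (Finset.mem_biUnion.2 ⟨p.1 + p.2, Finset.mem_range.2 (by omega),
        Finset.HasAntidiagonal.mem_antidiagonal.2 rfl⟩)
    rw [hg _ hge, mul_zero]
  rw [← Finset.sum_subset hsub hvan]
  have hdisj : (↑(range n) : Set ℕ).PairwiseDisjoint (fun k => Finset.HasAntidiagonal.antidiagonal k) := by
    intro i _ j _ hij
    refine Finset.disjoint_left.2 fun p hpi hpj => hij ?_
    rw [Finset.HasAntidiagonal.mem_antidiagonal] at hpi hpj
    omega
  rw [hTri, Finset.sum_biUnion hdisj]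
  have hk : ∀ k ∈ range n,
      (∑ p ∈ Finset.HasAntidiagonal.antidiagonal k, (catalan p.1 : ℚ) * (catalan p.2 : ℚ) * g (p.1 + p.2)) =
        (catalan (k + 1) : ℚ) * g k := by
    intro k _
    have h1 : ∀ p ∈ Finset.HasAntidiagonal.antidiagonal k,
        (catalan p.1 : ℚ) * (catalan p.2 : ℚ) * g (p.1 + p.2) =
          ((catalan p.1 * catalan p.2 : ℕ) : ℚ) * g k := by
      intro p hp
      rw [Finset.HasAntidiagonal.mem_antidiagonal] at hp
      rw [hp]
      push_cast
      ring
    rw [Finset.sum_congr rfl h1, ← Finset.sum_mul, ← Nat.cast_sum, ← catalan_succ']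
  rw [Finset.sum_congr rfl hk]
  refine (Finset.sum_subset (Finset.range_subset_range.2 hn) fun k _ hk2 => ?_).symm
  rw [Finset.mem_range, not_lt] at hk2
  rw [hg _ hk2, mul_zero]

private lemma keyG {n N : ℕ} (hn : n ≤ N) :
    coeff n ((1 - X) * G N) = coeff n (1 + X * G N ^ 2) := by
  have A : (1 - X) * G N =
      (∑ k ∈ range N, C (catalan (k + 1) : ℚ) * w ^ (2 * k + 1 + 1) * X ^ (k + 1)) + 1 := by
    rw [G, Finset.mul_sum, Finset.sum_range_succ']
    congr 1
    · refine Finset.sum_congr rfl fun k _ => ?_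
      rw [show 2 * (k + 1) + 1 = (2 * k + 1 + 1) + 1 by ring, pow_succ]
      linear_combination (C (catalan (k + 1) : ℚ) * w ^ (2 * k + 1 + 1) * X ^ (k + 1)) * hw
    · have : C ((catalan 0 : ℕ) : ℚ) = 1 := by rw [catalan_zero, Nat.cast_one, map_one]
      rw [this, one_mul, pow_zero, mul_one, show 2 * 0 + 1 = 1 by ring, pow_one, hw]
  have B : X * G N ^ 2 =
      ∑ a ∈ range (N + 1), ∑ b ∈ range (N + 1),
        C ((catalan a : ℚ) * (catalan b : ℚ)) * w ^ (2 * (a + b) + 1 + 1) * X ^ (a + b + 1) := by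
    rw [G, sq, Finset.sum_mul_sum, Finset.mul_sum]
    refine Finset.sum_congr rfl fun a _ => ?_
    rw [Finset.mul_sum]
    refine Finset.sum_congr rfl fun b _ => ?_
    rw [map_mul]
    ring
  set g : ℕ → ℚ := fun m => if m + 1 ≤ n then ((n + m).choose (2 * m + 1) : ℚ) else 0 with hgdef
  have hg : ∀ m, n ≤ m → g m = 0 := by
    intro m hm
    rw [hgdef]
    exact if_neg (by omega)
  have hL : ∀ k ∈ range N,
      coeff n (C (catalan (k + 1) : ℚ) * w ^ (2 * k + 1 + 1) * X ^ (k + 1)) =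
        (catalan (k + 1) : ℚ) * g k := by
    intro k _
    rw [key, hgdef]
    simp only []
    split_ifs with hk
    · rw [show n - (k + 1) + (2 * k + 1) = n + k by omega]
    · rw [mul_zero]
  have hR : ∀ a ∈ range (N + 1), ∀ b ∈ range (N + 1),
      coeff n (C ((catalan a : ℚ) * (catalan b : ℚ)) * w ^ (2 * (a + b) + 1 + 1) *
          X ^ (a + b + 1)) = (catalan a : ℚ) * (catalan b : ℚ) * g (a + b) := by
    intro a _ b _
    rw [key, hgdef]
    simp only []
    split_ifs with hab
    · rw [show n - (a + b + 1) + (2 * (a + b) + 1) = n + (a + b) by omega]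
    · rw [mul_zero]
  rw [A, B, map_add, map_add, map_sum]
  simp only [map_sum]
  rw [Finset.sum_congr rfl hL,
    Finset.sum_congr rfl (fun a ha => Finset.sum_congr rfl fun b hb => hR a ha b hb),
    sumlemma g hg hn, add_comm]

private lemma T_rec (n : ℕ) :
    T (n + 1) = T n + ∑ p ∈ Finset.HasAntidiagonal.antidiagonal n, T p.1 * T p.2 := by
  have hk := keyG (le_refl (n + 1))
  rw [sub_mul, one_mul, map_sub, coeff_succ_X_mul, coeff_G (le_refl _), coeff_G (by omega),
    map_add, PowerSeries.coeff_one, if_neg (Nat.succ_ne_zero n), coeff_succ_X_mul, sq,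
    coeff_mul] at hk
  have h2 : ∀ p ∈ Finset.HasAntidiagonal.antidiagonal n,
      coeff p.1 (G (n + 1)) * coeff p.2 (G (n + 1)) = T p.1 * T p.2 := by
    intro p hp
    have hps := Finset.HasAntidiagonal.mem_antidiagonal.1 hp
    rw [coeff_G (by omega), coeff_G (by omega)]
  rw [Finset.sum_congr rfl h2] at hk
  linarith

/-- The large Schröder generating function: the unique `u ∈ ℚ⟦X⟧` with `u(0) = 1` and
`u = 1/(1 - X - X·u)` satisfies `X·u² + (X-1)·u + 1 = 0` and has coefficients
`S_n = Σ_{k=0}^n binomial(n+k,2k)·C_k`. -/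
theorem schroeder_gf (u : ℚ⟦X⟧) (h0 : constantCoeff u = 1)
    (h : u * (1 - X - X * u) = 1) :
    X * u ^ 2 + (X - 1) * u + 1 = 0 ∧
    ∀ n : ℕ, coeff n u =
      ∑ k ∈ Finset.range (n + 1), (Nat.choose (n + k) (2 * k) : ℚ) * (catalan k : ℚ) := by
  constructor
  · linear_combination -h
  · suffices hS : ∀ n, coeff n u = T n by exact hS
    intro n
    induction n using Nat.strong_induction_on with
    | _ n ih =>
      cases n with
      | zero => simp [T, coeff_zero_eq_constantCoeff, h0]
      | succ m =>
        have hu : u = 1 + X * u + X * u ^ 2 := by linear_combination h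
        have hc : coeff (m + 1) u = coeff m u + coeff m (u ^ 2) := by
          conv_lhs => rw [hu]
          rw [map_add, map_add, PowerSeries.coeff_one, if_neg (Nat.succ_ne_zero m),
            coeff_succ_X_mul, coeff_succ_X_mul, zero_add]
        have h2 : ∀ p ∈ Finset.HasAntidiagonal.antidiagonal m,
            coeff p.1 u * coeff p.2 u = T p.1 * T p.2 := by
          intro p hp
          have hps := Finset.HasAntidiagonal.mem_antidiagonal.1 hp
          rw [ih p.1 (by omega), ih p.2 (by omega)]
        rw [hc, sq, coeff_mul, ih m (by omega), Finset.sum_congr rfl h2, ← T_rec]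
end

section
/- The Motzkin number generating function m(X), defined as the unique power series u with u(0)=1 satisfying u = 1/(1 - X - X^2·u), has n-th coefficient M_n = Σ_{k=0}^{⌊n/2⌋} binomial(n, 2k)·C_k, where C_k is the k-th Catalan number. -/
open PowerSeries Finset

private lemma vand (N : ℕ) (p q : ℕ) :
    ∑ i ∈ Finset.range (N + 1), (i.choose p) * ((N - i).choose q)
      = (N + 1).choose (p + q + 1) := by
  induction N generalizing q with
  | zero =>
    simp only [Nat.zero_add, range_one, sum_singleton, Nat.zero_sub, Nat.sub_zero]
    match p, q with
    | 0, 0 => decide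
    | 0, q + 1 => simp [Nat.choose_eq_zero_of_lt]
    | p + 1, q => simp [Nat.choose_eq_zero_of_lt]
  | succ N ih =>
    cases q with
    | zero =>
      simp only [Nat.choose_zero_right, mul_one, add_zero]
      rw [← Nat.sum_Icc_choose (N + 1) p]
      apply (Finset.sum_subset ?_ ?_).symm
      · intro i hi
        simp only [mem_Icc] at hi
        simp only [mem_range]; omega
      · intro i hi hni
        simp only [mem_range] at hi
        simp only [mem_Icc, not_and, not_le] at hni
        rcases le_or_gt p i with hpi | hpi
        · omega
        · exact Nat.choose_eq_zero_of_lt hpi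
    | succ q =>
      rw [Finset.sum_range_succ]
      have h0 : ((N + 1 - (N + 1)).choose (q + 1)) = 0 := by
        simp [Nat.choose_eq_zero_of_lt]
      rw [h0, mul_zero, add_zero]
      have hcongr : ∀ i ∈ Finset.range (N + 1),
          (i.choose p) * ((N + 1 - i).choose (q + 1))
            = (i.choose p) * ((N - i).choose q) + (i.choose p) * ((N - i).choose (q + 1)) := by
        intro i hi
        simp only [mem_range] at hi
        have : N + 1 - i = (N - i) + 1 := by omega
        rw [this, Nat.choose_succ_succ, Nat.mul_add]
      rw [Finset.sum_congr rfl hcongr, Finset.sum_add_distrib, ih q, ih (q + 1)]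
      rw [show p + (q + 1) + 1 = p + q + 1 + 1 from by omega]
      exact (Nat.choose_succ_succ (N + 1) (p + q + 1)).symm

/-- Extend the Motzkin sum range. -/
private lemma F_ext (n M : ℕ) (h : n / 2 < M) :
    ∑ k ∈ Finset.range (n / 2 + 1), (Nat.choose n (2 * k) : ℚ) * (catalan k : ℚ)
      = ∑ k ∈ Finset.range M, (Nat.choose n (2 * k) : ℚ) * (catalan k : ℚ) := by
  apply Finset.sum_subset
  · intro k hk
    simp only [mem_range] at *
    omega
  · intro k _ hk
    simp only [mem_range, not_lt] at hk
    have : n < 2 * k := by omega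
    simp [Nat.choose_eq_zero_of_lt this]

private lemma cat_conv (s : ℕ) :
    ∑ a ∈ Finset.range (s + 1), (catalan a : ℚ) * (catalan (s - a) : ℚ)
      = (catalan (s + 1) : ℚ) := by
  rw [catalan_succ]
  push_cast
  rw [← Finset.sum_range fun i => (catalan i : ℚ) * (catalan (s - i) : ℚ)]

private lemma key_s6 (m : ℕ) :
    (∑ k ∈ Finset.range ((m + 2) / 2 + 1), (Nat.choose (m + 2) (2 * k) : ℚ) * (catalan k : ℚ))
    = (∑ k ∈ Finset.range ((m + 1) / 2 + 1), (Nat.choose (m + 1) (2 * k) : ℚ) * (catalan k : ℚ))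
      + ∑ i ∈ Finset.range (m + 1),
          (∑ k ∈ Finset.range (i / 2 + 1), (Nat.choose i (2 * k) : ℚ) * (catalan k : ℚ)) *
          (∑ k ∈ Finset.range ((m - i) / 2 + 1),
            (Nat.choose (m - i) (2 * k) : ℚ) * (catalan k : ℚ)) := by
  -- Step 1: the convolution sum equals ∑_s C(m+1, 2s+1) * catalan (s+1)
  have hS : (∑ i ∈ Finset.range (m + 1),
          (∑ k ∈ Finset.range (i / 2 + 1), (Nat.choose i (2 * k) : ℚ) * (catalan k : ℚ)) *
          (∑ k ∈ Finset.range ((m - i) / 2 + 1),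
            (Nat.choose (m - i) (2 * k) : ℚ) * (catalan k : ℚ)))
      = ∑ s ∈ Finset.range (m + 1),
          (Nat.choose (m + 1) (2 * s + 1) : ℚ) * (catalan (s + 1) : ℚ) := by
    have step1 : ∀ i ∈ Finset.range (m + 1),
        (∑ k ∈ Finset.range (i / 2 + 1), (Nat.choose i (2 * k) : ℚ) * (catalan k : ℚ)) *
        (∑ k ∈ Finset.range ((m - i) / 2 + 1),
            (Nat.choose (m - i) (2 * k) : ℚ) * (catalan k : ℚ))
        = ∑ a ∈ Finset.range (m + 1), ∑ b ∈ Finset.range (m + 1),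
            ((Nat.choose i (2 * a) : ℚ) * (catalan a : ℚ)) *
            ((Nat.choose (m - i) (2 * b) : ℚ) * (catalan b : ℚ)) := by
      intro i hi
      simp only [mem_range] at hi
      rw [F_ext i (m + 1) (by omega), F_ext (m - i) (m + 1) (by omega),
        Finset.sum_mul_sum]
    rw [Finset.sum_congr rfl step1]
    rw [Finset.sum_comm]
    have step2 : ∀ a ∈ Finset.range (m + 1),
        (∑ i ∈ Finset.range (m + 1), ∑ b ∈ Finset.range (m + 1),
            ((Nat.choose i (2 * a) : ℚ) * (catalan a : ℚ)) *
            ((Nat.choose (m - i) (2 * b) : ℚ) * (catalan b : ℚ)))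
        = ∑ b ∈ Finset.range (m + 1),
            (catalan a : ℚ) * (catalan b : ℚ) *
              (Nat.choose (m + 1) (2 * a + 2 * b + 1) : ℚ) := by
      intro a _
      rw [Finset.sum_comm]
      refine Finset.sum_congr rfl fun b _ => ?_
      have : ∑ i ∈ Finset.range (m + 1),
          ((Nat.choose i (2 * a) : ℚ) * (catalan a : ℚ)) *
            ((Nat.choose (m - i) (2 * b) : ℚ) * (catalan b : ℚ))
          = (catalan a : ℚ) * (catalan b : ℚ) *
              ∑ i ∈ Finset.range (m + 1),
                (Nat.choose i (2 * a) : ℚ) * (Nat.choose (m - i) (2 * b) : ℚ) := by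
        rw [Finset.mul_sum]
        refine Finset.sum_congr rfl fun i _ => by ring
      rw [this]
      congr 1
      exact_mod_cast vand m (2 * a) (2 * b)
    rw [Finset.sum_congr rfl step2]
    -- now:  ∑_a ∑_b g a b  with  g a b = cat a * cat b * C(m+1, 2a+2b+1)
    -- shrink to triangle
    have step3 : ∀ a ∈ Finset.range (m + 1),
        (∑ b ∈ Finset.range (m + 1),
            (catalan a : ℚ) * (catalan b : ℚ) *
              (Nat.choose (m + 1) (2 * a + 2 * b + 1) : ℚ))
        = ∑ b ∈ Finset.range (m + 1 - a),
            (catalan a : ℚ) * (catalan b : ℚ) *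
              (Nat.choose (m + 1) (2 * a + 2 * b + 1) : ℚ) := by
      intro a ha
      simp only [mem_range] at ha
      refine (Finset.sum_subset ?_ ?_).symm
      · intro b hb; simp only [mem_range] at *; omega
      · intro b _ hb
        simp only [mem_range, not_lt] at hb
        have : m + 1 < 2 * a + 2 * b + 1 := by omega
        simp [Nat.choose_eq_zero_of_lt this]
    rw [Finset.sum_congr rfl step3]
    rw [← Finset.sum_range_diag_flip (m + 1)
      (fun a b => (catalan a : ℚ) * (catalan b : ℚ) *
        (Nat.choose (m + 1) (2 * a + 2 * b + 1) : ℚ))]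
    refine Finset.sum_congr rfl fun s hs => ?_
    have hinner : ∀ a ∈ Finset.range (s + 1),
        (catalan a : ℚ) * (catalan (s - a) : ℚ) *
          (Nat.choose (m + 1) (2 * a + 2 * (s - a) + 1) : ℚ)
        = (Nat.choose (m + 1) (2 * s + 1) : ℚ) *
            ((catalan a : ℚ) * (catalan (s - a) : ℚ)) := by
      intro a ha
      simp only [mem_range] at ha
      have : 2 * a + 2 * (s - a) + 1 = 2 * s + 1 := by omega
      rw [this]; ring
    rw [Finset.sum_congr rfl hinner, ← Finset.mul_sum, cat_conv]
  rw [hS]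
  -- Step 2: assemble via Pascal
  rw [F_ext (m + 2) (m + 2) (by omega), F_ext (m + 1) (m + 2) (by omega)]
  rw [Finset.sum_range_succ' (fun k => (Nat.choose (m + 2) (2 * k) : ℚ) * (catalan k : ℚ)) (m + 1),
    Finset.sum_range_succ' (fun k => (Nat.choose (m + 1) (2 * k) : ℚ) * (catalan k : ℚ)) (m + 1)]
  simp only [Nat.mul_zero, Nat.choose_zero_right, Nat.cast_one, catalan_zero, one_mul]
  have hterm : ∀ s ∈ Finset.range (m + 1),
      (Nat.choose (m + 2) (2 * (s + 1)) : ℚ) * (catalan (s + 1) : ℚ)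
      = (Nat.choose (m + 1) (2 * (s + 1)) : ℚ) * (catalan (s + 1) : ℚ)
        + (Nat.choose (m + 1) (2 * s + 1) : ℚ) * (catalan (s + 1) : ℚ) := by
    intro s _
    have h1 : 2 * (s + 1) = 2 * s + 1 + 1 := by ring
    have h2 : (Nat.choose (m + 2) (2 * s + 1 + 1) : ℚ)
        = (Nat.choose (m + 1) (2 * s + 1) : ℚ) + (Nat.choose (m + 1) (2 * s + 1 + 1) : ℚ) := by
      exact_mod_cast congrArg (Nat.cast (R := ℚ)) (Nat.choose_succ_succ (m + 1) (2 * s + 1))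
    rw [h1, h2]
    ring
  rw [Finset.sum_congr rfl hterm, Finset.sum_add_distrib]
  ring

/-- The Motzkin generating function: the unique `u ∈ ℚ⟦X⟧` with `u(0) = 1` and
`u = 1/(1 - X - X²·u)` has coefficients `M_n = Σ_{k=0}^{⌊n/2⌋} binomial(n,2k)·C_k`. -/
theorem motzkin_gf (u : ℚ⟦X⟧) (h0 : constantCoeff u = 1)
    (h : u * (1 - X - X ^ 2 * u) = 1) :
    ∀ n : ℕ, coeff n u =
      ∑ k ∈ Finset.range (n / 2 + 1), (Nat.choose n (2 * k) : ℚ) * (catalan k : ℚ) := by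
  have hu : u = 1 + X * u + X ^ 2 * (u * u) := by linear_combination h
  intro n
  induction n using Nat.strong_induction_on with
  | _ n ih =>
    match n with
    | 0 =>
      simp only [Nat.zero_div, Nat.zero_add, Finset.range_one, Finset.sum_singleton,
        Nat.mul_zero, Nat.choose_self, Nat.cast_one, catalan_zero, one_mul]
      rw [← coeff_zero_eq_constantCoeff] at h0
      exact h0
    | 1 =>
      have : coeff 1 u = coeff 0 u := by
        conv_lhs => rw [hu]
        rw [map_add, map_add, coeff_succ_X_mul]
        have : (X : ℚ⟦X⟧) ^ 2 * (u * u) = X ^ 2 * (u * u) := rfl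
        rw [show (1 : ℕ) = 0 + 1 by rfl, coeff_X_pow_mul']
        simp
      rw [this, ← coeff_zero_eq_constantCoeff] at *
      rw [this, h0]
      norm_num
    | (m + 2) =>
      have hrec : coeff (m + 2) u = coeff (m + 1) u + coeff m (u * u) := by
        conv_lhs => rw [hu]
        rw [map_add, map_add, coeff_succ_X_mul]
        rw [show m + 2 = m + 2 by rfl]
        have : coeff (m + 2) ((X : ℚ⟦X⟧) ^ 2 * (u * u)) = coeff m (u * u) :=
          coeff_X_pow_mul (u * u) 2 m
        rw [this]
        simp
      rw [hrec]
      rw [PowerSeries.coeff_mul,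
        Finset.Nat.sum_antidiagonal_eq_sum_range_succ_mk
          (fun ij => coeff ij.1 u * coeff ij.2 u) m]
      have hcoef : ∀ i ∈ Finset.range (m + 1),
          coeff i u * coeff (m - i) u
          = (∑ k ∈ Finset.range (i / 2 + 1), (Nat.choose i (2 * k) : ℚ) * (catalan k : ℚ)) *
            (∑ k ∈ Finset.range ((m - i) / 2 + 1),
              (Nat.choose (m - i) (2 * k) : ℚ) * (catalan k : ℚ)) := by
        intro i hi
        simp only [mem_range] at hi
        rw [ih i (by omega), ih (m - i) (by omega)]
      rw [ih (m + 1) (by omega), Finset.sum_congr rfl hcoef]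
      exact (key_s6 m).symm
end

section
/- Let u, v be scalars and let z be the unique power series with z(0)=1 satisfying z = 1/(1 - uX - vX·z). Then the bivariate series G(X,Y) = 1/(1 - (aY+b)X - (cY+d)X·z), arising from a Thron continued fraction with level-0 weights aY+b (horizontal) and cY+d (fall), equals g(X)/(1 - Y·f(X)) where g(X) = G(X,0) and f(X) = 1 - G(X,0)/G(X,1); that is, G is the bivariate generating function of a Riordan array. -/
open PowerSeries

/-- Thron continued fraction with level-0 weights `aY+b` (horizontal) and `cY+d` (fall),
and tail weights `u` (horizontal) and `v` (fall), gives the bivariate generating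
function of a Riordan array: `G(X,Y)·(1 - Y·f) = g` where `g = G(X,0)` and
`f = 1 - G(X,0)/G(X,1)`. Here the outer variable of `K⟦X⟧⟦Y⟧` is `Y`. -/
theorem thron_riordan {K : Type*} [Field K] [CharZero K] (a b c d u v : K)
    (z : K⟦X⟧) (hz0 : constantCoeff (R := K) z = 1)
    (hz : z * (1 - PowerSeries.C (R := K) u * X - PowerSeries.C (R := K) v * X * z) = 1)
    (G : PowerSeries (K⟦X⟧))
    (hG : G * (1
        - (PowerSeries.C (R := K⟦X⟧) (PowerSeries.C (R := K) a) * PowerSeries.X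
            + PowerSeries.C (R := K⟦X⟧) (PowerSeries.C (R := K) b)) * PowerSeries.C (R := K⟦X⟧) X
        - (PowerSeries.C (R := K⟦X⟧) (PowerSeries.C (R := K) c) * PowerSeries.X
            + PowerSeries.C (R := K⟦X⟧) (PowerSeries.C (R := K) d)) * PowerSeries.C (R := K⟦X⟧) X
            * PowerSeries.C (R := K⟦X⟧) z) = 1)
    (G1 : K⟦X⟧)
    (hG1 : G1 * (1 - PowerSeries.C (R := K) (a + b) * X - PowerSeries.C (R := K) (c + d) * X * z) = 1)
    (f : K⟦X⟧) (hf : f * G1 = G1 - constantCoeff (R := K⟦X⟧) G) :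
    G * (1 - PowerSeries.C (R := K⟦X⟧) f * PowerSeries.X)
      = PowerSeries.C (R := K⟦X⟧) (constantCoeff (R := K⟦X⟧) G) := by
  set G0 := constantCoeff (R := K⟦X⟧) G with hG0
  -- Step 1: constant coefficient of hG gives G0 * P = 1
  have hP : G0 * (1 - PowerSeries.C (R := K) b * X - PowerSeries.C (R := K) d * X * z) = 1 := by
    have h := congrArg (constantCoeff (R := K⟦X⟧)) hG
    simpa [← hG0] using h
  -- Step 2: f = G0 * Q
  have hW : (1 - PowerSeries.C (R := K) (a + b) * X - PowerSeries.C (R := K) (c + d) * X * z)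
      = (1 - PowerSeries.C (R := K) b * X - PowerSeries.C (R := K) d * X * z)
        - (PowerSeries.C (R := K) a * X + PowerSeries.C (R := K) c * X * z) := by
    rw [map_add, map_add]; ring
  have hfval : f = G0 * (PowerSeries.C (R := K) a * X + PowerSeries.C (R := K) c * X * z) := by
    calc f = f * (G1 * (1 - PowerSeries.C (R := K) (a + b) * X - PowerSeries.C (R := K) (c + d) * X * z)) := by
            rw [hG1, mul_one]
      _ = (f * G1) * (1 - PowerSeries.C (R := K) (a + b) * X - PowerSeries.C (R := K) (c + d) * X * z) := by
            ring
      _ = (G1 - G0) * (1 - PowerSeries.C (R := K) (a + b) * X - PowerSeries.C (R := K) (c + d) * X * z) := by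
            rw [hf]
      _ = G1 * (1 - PowerSeries.C (R := K) (a + b) * X - PowerSeries.C (R := K) (c + d) * X * z)
            - G0 * (1 - PowerSeries.C (R := K) (a + b) * X - PowerSeries.C (R := K) (c + d) * X * z) := by
            ring
      _ = 1 - G0 * ((1 - PowerSeries.C (R := K) b * X - PowerSeries.C (R := K) d * X * z)
            - (PowerSeries.C (R := K) a * X + PowerSeries.C (R := K) c * X * z)) := by
            rw [hG1, hW]
      _ = G0 * (PowerSeries.C (R := K) a * X + PowerSeries.C (R := K) c * X * z)
            + (1 - G0 * (1 - PowerSeries.C (R := K) b * X - PowerSeries.C (R := K) d * X * z)) := by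
            ring
      _ = G0 * (PowerSeries.C (R := K) a * X + PowerSeries.C (R := K) c * X * z) := by
            rw [hP]; ring
  -- Step 3: C G0 * D = 1 - C f * Y
  have hD : PowerSeries.C (R := K⟦X⟧) G0 * (1
        - (PowerSeries.C (R := K⟦X⟧) (PowerSeries.C (R := K) a) * PowerSeries.X
            + PowerSeries.C (R := K⟦X⟧) (PowerSeries.C (R := K) b)) * PowerSeries.C (R := K⟦X⟧) X
        - (PowerSeries.C (R := K⟦X⟧) (PowerSeries.C (R := K) c) * PowerSeries.X
            + PowerSeries.C (R := K⟦X⟧) (PowerSeries.C (R := K) d)) * PowerSeries.C (R := K⟦X⟧) X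
            * PowerSeries.C (R := K⟦X⟧) z)
      = 1 - PowerSeries.C (R := K⟦X⟧) f * PowerSeries.X := by
    have hP' := congrArg (PowerSeries.C (R := K⟦X⟧)) hP
    simp only [map_mul, map_sub, map_one, map_add] at hP'
    rw [hfval]
    simp only [map_mul, map_add]
    linear_combination hP'
  calc G * (1 - PowerSeries.C (R := K⟦X⟧) f * PowerSeries.X)
      = PowerSeries.C (R := K⟦X⟧) G0 * (G * (1
        - (PowerSeries.C (R := K⟦X⟧) (PowerSeries.C (R := K) a) * PowerSeries.X
            + PowerSeries.C (R := K⟦X⟧) (PowerSeries.C (R := K) b)) * PowerSeries.C (R := K⟦X⟧) X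
        - (PowerSeries.C (R := K⟦X⟧) (PowerSeries.C (R := K) c) * PowerSeries.X
            + PowerSeries.C (R := K⟦X⟧) (PowerSeries.C (R := K) d)) * PowerSeries.C (R := K⟦X⟧) X
            * PowerSeries.C (R := K⟦X⟧) z)) := by rw [← hD]; ring
    _ = PowerSeries.C (R := K⟦X⟧) G0 := by rw [hG, mul_one]
end

section
/- Let z be the unique power series with z(0)=1 satisfying z = 1/(1 - uX - vX·z), and let w be the unique power series with w(0)=1 satisfying w = 1/(1 - (u+2v)X - v(u+v)X^2·w). Then for all parameters a, b, c, d: 1/(1 - (aY+b)X - (cY+d)X·z) = 1/(1 - ((a+c)Y + b+d)X - (u+v)(cY+d)X^2·w); i.e., the Thron continued fraction with tail weights (u; v) and level-0 weights (aY+b; cY+d) equals the Jacobi continued fraction with tail weights (u+2v; v(u+v)) and level-0 weights ((a+c)Y+b+d; (u+v)(cY+d)). -/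
open PowerSeries

/-- Thron-to-Jacobi equivalence: with `z` the tail of the Thron fraction with
weights `(u; v)` and `w` the tail of the Jacobi fraction with weights
`(u+2v; v(u+v))`, the Thron continued fraction with level-0 weights
`(aY+b; cY+d)` equals the Jacobi continued fraction with level-0 weights
`((a+c)Y+b+d; (u+v)(cY+d))`, as elements of `K⟦X⟧⟦Y⟧` (outer variable `Y`). -/
theorem thron_eq_jacobi {K : Type*} [Field K] [CharZero K] (a b c d u v : K)
    (z : K⟦X⟧) (hz0 : constantCoeff (R := K) z = 1)
    (hz : z * (1 - PowerSeries.C (R := K) u * X - PowerSeries.C (R := K) v * X * z) = 1)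
    (w : K⟦X⟧) (hw0 : constantCoeff (R := K) w = 1)
    (hw : w * (1 - PowerSeries.C (R := K) (u + 2 * v) * X
        - PowerSeries.C (R := K) (v * (u + v)) * X ^ 2 * w) = 1)
    (A B : PowerSeries (K⟦X⟧))
    (hA : A * (1
        - (PowerSeries.C (R := K⟦X⟧) (PowerSeries.C (R := K) a) * PowerSeries.X
            + PowerSeries.C (R := K⟦X⟧) (PowerSeries.C (R := K) b)) * PowerSeries.C (R := K⟦X⟧) X
        - (PowerSeries.C (R := K⟦X⟧) (PowerSeries.C (R := K) c) * PowerSeries.X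
            + PowerSeries.C (R := K⟦X⟧) (PowerSeries.C (R := K) d)) * PowerSeries.C (R := K⟦X⟧) X
            * PowerSeries.C (R := K⟦X⟧) z) = 1)
    (hB : B * (1
        - (PowerSeries.C (R := K⟦X⟧) (PowerSeries.C (R := K) (a + c)) * PowerSeries.X
            + PowerSeries.C (R := K⟦X⟧) (PowerSeries.C (R := K) (b + d))) * PowerSeries.C (R := K⟦X⟧) X
        - PowerSeries.C (R := K⟦X⟧) (PowerSeries.C (R := K) (u + v))
            * (PowerSeries.C (R := K⟦X⟧) (PowerSeries.C (R := K) c) * PowerSeries.X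
                + PowerSeries.C (R := K⟦X⟧) (PowerSeries.C (R := K) d))
            * PowerSeries.C (R := K⟦X⟧) X ^ 2 * PowerSeries.C (R := K⟦X⟧) w) = 1) :
    A = B := by
  -- The key identity: z = 1 + (u+v) X w
  set z' : K⟦X⟧ := 1 + PowerSeries.C (R := K) (u + v) * X * w with hz'def
  have hz' : z' * (1 - PowerSeries.C (R := K) u * X - PowerSeries.C (R := K) v * X * z') = 1 := by
    have hw' := hw
    rw [hz'def]
    simp only [map_add, map_mul, map_ofNat] at hw' ⊢
    linear_combination ((PowerSeries.C (R := K) u + PowerSeries.C (R := K) v) * X) * hw'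
  have hkey : z = z' := by
    have hfac : (z - z') * (1 - PowerSeries.C (R := K) u * X
        - PowerSeries.C (R := K) v * X * (z + z')) = 0 := by
      linear_combination hz - hz'
    rcases mul_eq_zero.1 hfac with h | h
    · exact sub_eq_zero.1 h
    · exfalso
      have := congrArg (constantCoeff (R := K)) h
      simp [hz'def, hw0] at this
  -- Now the two denominators agree.
  have hD : (1
        - (PowerSeries.C (R := K⟦X⟧) (PowerSeries.C (R := K) a) * PowerSeries.X
            + PowerSeries.C (R := K⟦X⟧) (PowerSeries.C (R := K) b)) * PowerSeries.C (R := K⟦X⟧) X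
        - (PowerSeries.C (R := K⟦X⟧) (PowerSeries.C (R := K) c) * PowerSeries.X
            + PowerSeries.C (R := K⟦X⟧) (PowerSeries.C (R := K) d)) * PowerSeries.C (R := K⟦X⟧) X
            * PowerSeries.C (R := K⟦X⟧) z)
      = (1
        - (PowerSeries.C (R := K⟦X⟧) (PowerSeries.C (R := K) (a + c)) * PowerSeries.X
            + PowerSeries.C (R := K⟦X⟧) (PowerSeries.C (R := K) (b + d))) * PowerSeries.C (R := K⟦X⟧) X
        - PowerSeries.C (R := K⟦X⟧) (PowerSeries.C (R := K) (u + v))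
            * (PowerSeries.C (R := K⟦X⟧) (PowerSeries.C (R := K) c) * PowerSeries.X
                + PowerSeries.C (R := K⟦X⟧) (PowerSeries.C (R := K) d))
            * PowerSeries.C (R := K⟦X⟧) X ^ 2 * PowerSeries.C (R := K⟦X⟧) w) := by
    rw [hkey, hz'def]
    simp only [map_add, map_mul, map_one, map_pow]
    ring
  rw [hD] at hA
  calc A = A * (B * (1
        - (PowerSeries.C (R := K⟦X⟧) (PowerSeries.C (R := K) (a + c)) * PowerSeries.X
            + PowerSeries.C (R := K⟦X⟧) (PowerSeries.C (R := K) (b + d))) * PowerSeries.C (R := K⟦X⟧) X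
        - PowerSeries.C (R := K⟦X⟧) (PowerSeries.C (R := K) (u + v))
            * (PowerSeries.C (R := K⟦X⟧) (PowerSeries.C (R := K) c) * PowerSeries.X
                + PowerSeries.C (R := K⟦X⟧) (PowerSeries.C (R := K) d))
            * PowerSeries.C (R := K⟦X⟧) X ^ 2 * PowerSeries.C (R := K⟦X⟧) w)) := by rw [hB, mul_one]
    _ = B := by rw [show ∀ x y r : PowerSeries (K⟦X⟧), x * (y * r) = y * (x * r) from
          fun x y r => by ring, hA, mul_one]
end

section
/- Let z be the power series with z(0)=1 satisfying z = 1/(1 - cX - dX^2·z). Then G(X,Y) = 1/(1 - (Y+a)X - (Y+b)X^2·z) satisfies the Riordan factorization G(X,Y) = g(X)/(1 - Y·f(X)) with g(X) = G(X,0) and f(X) = 1 - G(X,0)/G(X,1). -/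
open PowerSeries

/-- Jacobi continued fraction with level-0 weights `(Y+a; Y+b)` and constant tail
weights `(c; d)`: `G(X,Y) = 1/(1 - (Y+a)X - (Y+b)X²·z)` satisfies the Riordan
factorization `G·(1 - Y·f) = g` with `g = G(X,0)` and `f = 1 - G(X,0)/G(X,1)`.
Outer variable of `K⟦X⟧⟦Y⟧` is `Y`. -/
theorem jacobi_riordan {K : Type*} [Field K] [CharZero K] (a b c d : K)
    (z : K⟦X⟧) (hz0 : constantCoeff (R := K) z = 1)
    (hz : z * (1 - PowerSeries.C (R := K) c * X - PowerSeries.C (R := K) d * X ^ 2 * z) = 1)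
    (G : PowerSeries (K⟦X⟧))
    (hG : G * (1
        - (PowerSeries.X + PowerSeries.C (R := K⟦X⟧) (PowerSeries.C (R := K) a))
            * PowerSeries.C (R := K⟦X⟧) X
        - (PowerSeries.X + PowerSeries.C (R := K⟦X⟧) (PowerSeries.C (R := K) b))
            * PowerSeries.C (R := K⟦X⟧) X ^ 2 * PowerSeries.C (R := K⟦X⟧) z) = 1)
    (G1 : K⟦X⟧)
    (hG1 : G1 * (1 - PowerSeries.C (R := K) (1 + a) * X
        - PowerSeries.C (R := K) (1 + b) * X ^ 2 * z) = 1)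
    (f : K⟦X⟧) (hf : f * G1 = G1 - constantCoeff (R := K⟦X⟧) G) :
    G * (1 - PowerSeries.C (R := K⟦X⟧) f * PowerSeries.X)
      = PowerSeries.C (R := K⟦X⟧) (constantCoeff (R := K⟦X⟧) G) := by
  set g0 := constantCoeff (R := K⟦X⟧) G with hg0
  -- constant-coefficient (Y = 0) relation
  have h0 : g0 * (1 - PowerSeries.C (R := K) a * X - PowerSeries.C (R := K) b * X ^ 2 * z) = 1 := by
    have := congrArg (constantCoeff (R := K⟦X⟧)) hG
    simpa using this
  have hG1ne : G1 ≠ 0 := by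
    intro h
    rw [h, zero_mul] at hG1
    exact zero_ne_one hG1
  have hG1' : G1 * (1 - (1 + PowerSeries.C (R := K) a) * X
      - (1 + PowerSeries.C (R := K) b) * X ^ 2 * z) = 1 := by
    simpa only [map_add, map_one] using hG1
  have hf' : f = g0 * (X + X ^ 2 * z) := by
    apply mul_right_cancel₀ hG1ne
    rw [hf]
    linear_combination g0 * hG1' - G1 * h0
  have key : (1 - PowerSeries.C (R := K⟦X⟧) f * PowerSeries.X : PowerSeries (K⟦X⟧))
      = PowerSeries.C (R := K⟦X⟧) g0 * (1
        - (PowerSeries.X + PowerSeries.C (R := K⟦X⟧) (PowerSeries.C (R := K) a))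
            * PowerSeries.C (R := K⟦X⟧) X
        - (PowerSeries.X + PowerSeries.C (R := K⟦X⟧) (PowerSeries.C (R := K) b))
            * PowerSeries.C (R := K⟦X⟧) X ^ 2 * PowerSeries.C (R := K⟦X⟧) z) := by
    have hC := congrArg (PowerSeries.C (R := K⟦X⟧)) h0
    rw [hf']
    simp only [map_mul, map_sub, map_one, map_add, map_pow] at hC ⊢
    linear_combination -hC
  linear_combination G * key + PowerSeries.C (R := K⟦X⟧) g0 * hG
end

section
/- The power series f(X) = (√(1-2X-3X²) - X - 1)/2, equivalently the power series with f(0)=0 solving f² + (1+X)f + X + X² = 0 with f'(0) = -1, is its own compositional inverse: f(f(X)) = X. Consequently (1, f) is an involution in the Riordan group. -/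
open PowerSeries Finset

/-- Composition `f ∘ g` of formal power series (valid when `g` has zero constant term). -/
noncomputable def psComp (f g : ℚ⟦X⟧) : ℚ⟦X⟧ :=
  PowerSeries.mk fun n => ∑ k ∈ Finset.range (n + 1), coeff k f * coeff n (g ^ k)

namespace MotzkinAux

variable {g : ℚ⟦X⟧}

lemma coeff_psComp (a : ℚ⟦X⟧) (n : ℕ) :
    coeff n (psComp a g) = ∑ k ∈ range (n + 1), coeff k a * coeff n (g ^ k) := by
  simp [psComp, coeff_mk]

lemma coeff_pow_eq_zero (hg : constantCoeff g = 0) :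
    ∀ k n : ℕ, n < k → coeff n (g ^ k) = 0 := by
  intro k
  induction k with
  | zero => intro n h; exact absurd h (Nat.not_lt_zero n)
  | succ k ih =>
    intro n h
    rw [pow_succ, coeff_mul]
    apply Finset.sum_eq_zero
    rintro ⟨i, j⟩ hij
    rw [HasAntidiagonal.mem_antidiagonal] at hij
    by_cases hi : i < k
    · rw [ih i hi, zero_mul]
    · have hj : j = 0 := by omega
      subst hj
      rw [coeff_zero_eq_constantCoeff, hg, mul_zero]

lemma coeff_aeval (hg : constantCoeff g = 0) (p : Polynomial ℚ) (n : ℕ) :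
    coeff n (Polynomial.aeval g p) = ∑ k ∈ range (n + 1), p.coeff k * coeff n (g ^ k) := by
  have h1 : coeff n (Polynomial.aeval g p)
      = ∑ k ∈ p.support, p.coeff k * coeff n (g ^ k) := by
    rw [Polynomial.aeval_def, Polynomial.eval₂_eq_sum, Polynomial.sum, map_sum]
    refine Finset.sum_congr rfl fun k _ => ?_
    rw [← Algebra.smul_def, map_smul, smul_eq_mul]
  rw [h1]
  trans ∑ k ∈ p.support ∩ range (n + 1), p.coeff k * coeff n (g ^ k)
  · symm
    apply Finset.sum_subset Finset.inter_subset_left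
    intro k hk hk'
    have hn : n < k := by
      by_contra h
      exact hk' (Finset.mem_inter.mpr ⟨hk, Finset.mem_range.mpr (by omega)⟩)
    rw [coeff_pow_eq_zero hg k n hn, mul_zero]
  · apply Finset.sum_subset Finset.inter_subset_right
    intro k hk hk'
    have hc : p.coeff k = 0 := by
      by_contra h
      exact hk' (Finset.mem_inter.mpr ⟨Polynomial.mem_support_iff.mpr h, hk⟩)
    rw [hc, zero_mul]

lemma coeff_aeval_trunc (hg : constantCoeff g = 0) (a : ℚ⟦X⟧) {m n : ℕ} (h : m ≤ n) :
    coeff m (Polynomial.aeval g (trunc (n + 1) a)) = coeff m (psComp a g) := by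
  rw [coeff_aeval hg, coeff_psComp]
  refine Finset.sum_congr rfl fun k hk => ?_
  rw [mem_range] at hk
  rw [PowerSeries.coeff_trunc, if_pos (by omega)]

lemma psComp_mul (hg : constantCoeff g = 0) (a b : ℚ⟦X⟧) :
    psComp (a * b) g = psComp a g * psComp b g := by
  ext n
  have hL : coeff n (psComp (a * b) g)
      = coeff n (Polynomial.aeval g (trunc (n + 1) a * trunc (n + 1) b)) := by
    rw [coeff_aeval hg, coeff_psComp]
    refine Finset.sum_congr rfl fun k hk => ?_
    rw [mem_range] at hk
    congr 1
    rw [coeff_mul_eq_coeff_trunc_mul_trunc a b (show k < n + 1 by omega),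
      ← Polynomial.coeff_coe, Polynomial.coe_mul]
  rw [hL, map_mul, PowerSeries.coeff_mul, PowerSeries.coeff_mul]
  refine Finset.sum_congr rfl fun p hp => ?_
  rw [HasAntidiagonal.mem_antidiagonal] at hp
  rw [coeff_aeval_trunc hg a (show p.1 ≤ n by omega),
    coeff_aeval_trunc hg b (show p.2 ≤ n by omega)]

lemma psComp_add (a b : ℚ⟦X⟧) : psComp (a + b) g = psComp a g + psComp b g := by
  ext n
  simp only [coeff_psComp, map_add, add_mul, Finset.sum_add_distrib]

lemma psComp_one : psComp 1 g = (1 : ℚ⟦X⟧) := by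
  ext n
  rw [coeff_psComp, Finset.sum_eq_single 0]
  · simp
  · intro k _ hk
    simp [PowerSeries.coeff_one, hk]
  · intro h
    exact absurd (Finset.mem_range.mpr (Nat.succ_pos n)) h

lemma psComp_X (hg : constantCoeff g = 0) : psComp X g = g := by
  ext n
  rw [coeff_psComp, Finset.sum_eq_single 1]
  · simp
  · intro k _ hk
    simp [PowerSeries.coeff_X, hk]
  · intro h
    rw [mem_range, not_lt] at h
    have hn : n = 0 := by omega
    subst hn
    simp [hg]

end MotzkinAux

open MotzkinAux in
/-- The power series `f = (√(1-2X-3X²) - X - 1)/2`, i.e. the solution with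
`f(0) = 0`, `f'(0) = -1` of `f² + (1+X)f + X + X² = 0`, is its own compositional
inverse, so that `(1, f)` is a Riordan involution. -/
theorem motzkin_involution (f : ℚ⟦X⟧) (h0 : constantCoeff f = 0)
    (h1 : coeff 1 f = -1)
    (hq : f ^ 2 + (1 + X) * f + X + X ^ 2 = 0) :
    psComp f f = X := by
  set g := psComp f f with hgdef
  have hmap : psComp (f ^ 2 + (1 + X) * f + X + X ^ 2) f = 0 := by
    rw [hq]
    ext n
    rw [coeff_psComp]
    simp
  have e1 : psComp (f ^ 2) f = g ^ 2 := by
    rw [pow_two, psComp_mul h0, ← pow_two]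
  have e3 : psComp X f = f := psComp_X h0
  have e2 : psComp ((1 + X) * f) f = (1 + f) * g := by
    rw [psComp_mul h0, psComp_add, psComp_one, e3]
  have e4 : psComp (X ^ 2) f = f ^ 2 := by
    rw [pow_two, psComp_mul h0, e3, ← pow_two]
  rw [psComp_add, psComp_add, psComp_add, e1, e2, e3, e4] at hmap
  have hqX : X ^ 2 + (1 + f) * X + f + f ^ 2 = 0 := by linear_combination hq
  have hfactor : (g - X) * (g + X + (1 + f)) = 0 := by
    linear_combination hmap - hqX
  have hg0 : constantCoeff g = 0 := by
    rw [← coeff_zero_eq_constantCoeff_apply, hgdef, coeff_psComp]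
    simp [h0]
  rcases mul_eq_zero.mp hfactor with h | h
  · exact sub_eq_zero.mp h
  · exfalso
    have hc := congrArg (constantCoeff) h
    simp [hg0, h0] at hc
end

section
/- The Riordan array ((1-X)/(1+X), X(1-X)/(1+X))⁻¹ equals ((1 - X - √(1-6X+X²))/(2X), (1 - X - √(1-6X+X²))/2); in particular, the power series F(X) = (1 - X - √(1-6X+X²))/2 is the compositional inverse of X(1-X)/(1+X). -/
open PowerSeries Finset

namespace PsCompAux

lemma coeff_pow_eq_zero {g : ℚ⟦X⟧} (hg : constantCoeff g = 0) {n k : ℕ} (h : n < k) :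
    coeff n (g ^ k) = 0 := by
  have hdvd : (X : ℚ⟦X⟧) ^ k ∣ g ^ k :=
    pow_dvd_pow_of_dvd (PowerSeries.X_dvd_iff.mpr hg) k
  exact PowerSeries.X_pow_dvd_iff.mp hdvd n h

/-- For `a ≤ n`, the `a`-th coefficient of `psComp f g` equals that of the
evaluation of the truncation of `f` at `g`. -/
lemma coeff_psComp_eq {g : ℚ⟦X⟧} (hg : constantCoeff g = 0) (f : ℚ⟦X⟧) {a n : ℕ}
    (han : a ≤ n) :
    coeff a (psComp f g) = coeff a ((trunc (n + 1) f).eval₂ (C) g) := by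
  rw [eval₂_trunc_eq_sum_range, map_sum, psComp, coeff_mk]
  rw [← Finset.sum_subset (Finset.range_subset_range.mpr (Nat.succ_le_succ han))]
  · apply Finset.sum_congr rfl
    intro k _
    rw [coeff_C_mul]
  · intro k hk hk'
    rw [Finset.mem_range] at hk hk'
    rw [coeff_C_mul, coeff_pow_eq_zero hg (by omega), mul_zero]

lemma coeff_eval₂_eq_zero {g : ℚ⟦X⟧} (hg : constantCoeff g = 0) {p : Polynomial ℚ} {n : ℕ}
    (hp : ∀ k ≤ n, p.coeff k = 0) : coeff n (p.eval₂ (C) g) = 0 := by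
  rw [Polynomial.eval₂_eq_sum, Polynomial.sum, map_sum]
  apply Finset.sum_eq_zero
  intro k hk
  have hkn : n < k := by
    by_contra h
    exact Polynomial.mem_support_iff.mp hk (hp k (by omega))
  rw [coeff_C_mul, coeff_pow_eq_zero hg hkn, mul_zero]

lemma psComp_mul {g : ℚ⟦X⟧} (hg : constantCoeff g = 0) (f h : ℚ⟦X⟧) :
    psComp (f * h) g = psComp f g * psComp h g := by
  ext n
  rw [coeff_psComp_eq hg (f * h) (le_refl n), PowerSeries.coeff_mul]
  have hsum : ∀ p ∈ HasAntidiagonal.antidiagonal n,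
      coeff p.1 (psComp f g) * coeff p.2 (psComp h g) =
      coeff p.1 ((trunc (n + 1) f).eval₂ (C) g) *
        coeff p.2 ((trunc (n + 1) h).eval₂ (C) g) := by
    intro p hp
    rw [HasAntidiagonal.mem_antidiagonal] at hp
    rw [coeff_psComp_eq hg f (n := n) (by omega), coeff_psComp_eq hg h (n := n) (by omega)]
  rw [Finset.sum_congr rfl hsum, ← PowerSeries.coeff_mul, ← Polynomial.eval₂_mul]
  have key : coeff n ((trunc (n + 1) f * trunc (n + 1) h).eval₂ (C) g) -
      coeff n ((trunc (n + 1) (f * h)).eval₂ (C) g) = 0 := by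
    rw [← map_sub, ← Polynomial.eval₂_sub]
    apply coeff_eval₂_eq_zero hg
    intro k hk
    rw [Polynomial.coeff_sub, Polynomial.coeff_mul, coeff_trunc, if_pos (by omega),
      PowerSeries.coeff_mul, sub_eq_zero]
    apply Finset.sum_congr rfl
    intro p hp
    rw [HasAntidiagonal.mem_antidiagonal] at hp
    rw [coeff_trunc, coeff_trunc, if_pos (by omega), if_pos (by omega)]
  linarith [key]

lemma psComp_add (f h g : ℚ⟦X⟧) : psComp (f + h) g = psComp f g + psComp h g := by
  ext n
  simp [psComp, add_mul, Finset.sum_add_distrib]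

lemma psComp_C (c : ℚ) (g : ℚ⟦X⟧) : psComp (C c) g = C c := by
  ext n
  rw [psComp, coeff_mk]
  rw [Finset.sum_eq_single 0]
  · simp [coeff_C]
  · intro k _ hk
    simp [coeff_C, hk]
  · simp

lemma psComp_one (g : ℚ⟦X⟧) : psComp 1 g = 1 := by
  have := psComp_C 1 g
  simpa using this

lemma psComp_zero (g : ℚ⟦X⟧) : psComp 0 g = 0 := by
  ext n; simp [psComp]

lemma psComp_X {g : ℚ⟦X⟧} (hg : constantCoeff g = 0) : psComp X g = g := by
  ext n
  rw [psComp, coeff_mk]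
  rcases Nat.eq_zero_or_pos n with hn | hn
  · subst hn
    simp [coeff_X, hg]
  · rw [Finset.sum_eq_single 1]
    · simp
    · intro k _ hk
      simp [coeff_X, hk]
    · intro h
      rw [Finset.mem_range] at h
      omega

/-- `psComp · g` as a ring homomorphism, for `g` with zero constant term. -/
noncomputable def compHom (g : ℚ⟦X⟧) (hg : constantCoeff g = 0) : ℚ⟦X⟧ →+* ℚ⟦X⟧ where
  toFun f := psComp f g
  map_one' := psComp_one g
  map_mul' f h := psComp_mul hg f h
  map_zero' := psComp_zero g
  map_add' f h := psComp_add f h g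

@[simp] lemma compHom_apply (g : ℚ⟦X⟧) (hg) (f : ℚ⟦X⟧) : compHom g hg f = psComp f g := rfl

lemma constantCoeff_psComp (f g : ℚ⟦X⟧) :
    constantCoeff (psComp f g) = constantCoeff f := by
  rw [← coeff_zero_eq_constantCoeff_apply, psComp, coeff_mk]
  simp

end PsCompAux

open PsCompAux in
/-- With `s = √(1-6X+X²)` and `F = (1-X-s)/2`, the Riordan array
`((1-X)/(1+X), X(1-X)/(1+X))⁻¹` equals `((1-X-s)/(2X), (1-X-s)/2)`:
`F` is the compositional inverse of `φ = X(1-X)/(1+X)`, and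
`((1+X)/(1-X)) ∘ F = (1-X-s)/(2X) = A` where `2XA = 1-X-s`. -/
theorem riordan_inverse_schroeder (s : ℚ⟦X⟧) (hs0 : constantCoeff s = 1)
    (hs : s ^ 2 = 1 - 6 * X + X ^ 2)
    (F : ℚ⟦X⟧) (hF : 2 * F = 1 - X - s)
    (A : ℚ⟦X⟧) (hA : 2 * X * A = 1 - X - s) :
    psComp F (X * (1 - X) * (1 + X)⁻¹) = X ∧
    psComp (X * (1 - X) * (1 + X)⁻¹) F = X ∧
    psComp ((1 + X) * (1 - X)⁻¹) F = A := by
  set φ : ℚ⟦X⟧ := X * (1 - X) * (1 + X)⁻¹ with hφdef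
  -- basic constant coefficient facts
  have h2ne : (2 : ℚ⟦X⟧) ≠ 0 := by
    intro h
    have h' := congrArg (constantCoeff) h
    rw [map_ofNat, map_zero] at h'
    norm_num at h'
  have hF0 : constantCoeff F = 0 := by
    have h2 := congrArg (constantCoeff) hF
    rw [map_mul, map_sub, map_sub, map_one, constantCoeff_X, hs0, map_ofNat] at h2
    linarith
  have hφ0 : constantCoeff φ = 0 := by
    simp [hφdef]
  have h1pX : constantCoeff (1 + X : ℚ⟦X⟧) ≠ 0 := by simp
  have h1mX : constantCoeff (1 - X : ℚ⟦X⟧) ≠ 0 := by simp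
  -- the quadratic equation satisfied by F
  have h4ne : (4 : ℚ⟦X⟧) ≠ 0 := by
    intro h
    have h' := congrArg (constantCoeff) h
    rw [map_ofNat, map_zero] at h'
    norm_num at h'
  have quadF : F ^ 2 + (X - 1) * F + X = 0 := by
    have h4 : (4 : ℚ⟦X⟧) * (F ^ 2 + (X - 1) * F + X) = 0 := by
      linear_combination (2 * F - 1 + X - s) * hF + hs
    rcases mul_eq_zero.mp h4 with h | h
    · exact absurd h h4ne
    · exact h
  have h1pF : (1 + F : ℚ⟦X⟧) ≠ 0 := by
    intro h
    have := congrArg (constantCoeff) h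
    simp [hF0] at this
  have h1mF : (1 - F : ℚ⟦X⟧) ≠ 0 := by
    intro h
    have := congrArg (constantCoeff) h
    simp [hF0] at this
  have hXA : X * A = F := by
    have h2 : (2 : ℚ⟦X⟧) * (X * A) = 2 * F := by rw [hF]; linear_combination hA
    exact mul_left_cancel₀ h2ne h2
  -- φ * (1 + X) = X * (1 - X)
  have hφmul : φ * (1 + X) = X * (1 - X) := by
    rw [hφdef, mul_assoc, PowerSeries.inv_mul_cancel _ h1pX, mul_one]
  -- The ring hom substituting F
  set M := compHom F hF0 with hM
  have hMX : M X = F := psComp_X hF0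
  have hM1pX : M (1 + X) = 1 + F := by rw [map_add, map_one, hMX]
  have hM1mX : M (1 - X) = 1 - F := by rw [map_sub, map_one, hMX]
  -- Goal 2: psComp φ F = X
  have goal2 : psComp φ F = X := by
    have hMφ : M φ * (1 + F) = F * (1 - F) := by
      rw [hφdef, map_mul, map_mul, hMX, hM1mX, mul_assoc, ← hM1pX, ← map_mul,
        PowerSeries.inv_mul_cancel _ h1pX, map_one, mul_one]
    have hX1pF : X * (1 + F) = F * (1 - F) := by linear_combination quadF
    have : M φ * (1 + F) = X * (1 + F) := by rw [hMφ, hX1pF]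
    exact mul_right_cancel₀ h1pF this
  -- The ring hom substituting φ
  set N := compHom φ hφ0 with hN
  have hNX : N X = φ := psComp_X hφ0
  -- Goal 1: psComp F φ = X
  have goal1 : psComp F φ = X := by
    set G : ℚ⟦X⟧ := psComp F φ with hGdef
    have hG0 : constantCoeff G = 0 := by
      rw [hGdef, constantCoeff_psComp, hF0]
    have hNquad : G ^ 2 + (φ - 1) * G + φ = 0 := by
      have := congrArg N quadF
      rw [map_add, map_add, map_mul, map_pow, map_sub, map_one, hNX, map_zero] at this
      exact this
    have hfactor : (G - X) * (G + X + φ - 1) = 0 := by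
      linear_combination hNquad - hφmul
    rcases mul_eq_zero.mp hfactor with h | h
    · exact sub_eq_zero.mp h
    · exfalso
      have := congrArg (constantCoeff) h
      simp [hG0, hφ0] at this
  -- Goal 3: psComp ((1+X)(1-X)⁻¹) F = A
  have goal3 : psComp ((1 + X) * (1 - X)⁻¹) F = A := by
    have hB : M ((1 - X)⁻¹) * (1 - F) = 1 := by
      rw [← hM1mX, ← map_mul, PowerSeries.inv_mul_cancel _ h1mX, map_one]
    have hAF : A * (1 - F) = 1 + F := by
      have hXver : X * (A * (1 - F)) = X * (1 + F) := by
        have : X * (A * (1 - F)) = F * (1 - F) := by linear_combination (1 - F) * hXA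
        rw [this]; linear_combination -quadF
      exact mul_left_cancel₀ PowerSeries.X_ne_zero hXver
    have hMgoal : M ((1 + X) * (1 - X)⁻¹) * (1 - F) = A * (1 - F) := by
      rw [map_mul, hM1pX, mul_assoc, hB, mul_one, hAF]
    exact mul_right_cancel₀ h1mF hMgoal
  exact ⟨goal1, goal2, goal3⟩
end

section
/- Let g(X) = 4/(3 + X + √(1-10X+X²)), the generating function of the moments 1, 1, 4, 22, 142, ... of the Laurent biorthogonal polynomials P_n(x) = (x+1)P_{n-1}(x) - 3x·P_{n-2}(x). Then g satisfies both: (i) g = 1/(1 - X·t) where t is the power series with t(0)=1 satisfying t = 1/(1 - X - 2X·t) (Thron form), and (ii) g = 1/(1 - X - 3X²·w) where w is the power series with w(0)=1 satisfying w = 1/(1 - 5X - 6X²·w) (Jacobi form). -/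
open PowerSeries

/-- The moment generating function `g = 4/(3 + X + √(1-10X+X²))` of the Laurent
biorthogonal polynomials `P_n(x) = (x+1)P_{n-1}(x) - 3x·P_{n-2}(x)` has both a
Thron expression `g = 1/(1 - X·t)` with `t = 1/(1 - X - 2X·t)` and a Jacobi
expression `g = 1/(1 - X - 3X²·w)` with `w = 1/(1 - 5X - 6X²·w)`. -/
theorem laurent_biorthogonal_moments (s : ℚ⟦X⟧) (hs0 : constantCoeff s = 1)
    (hs : s ^ 2 = 1 - 10 * X + X ^ 2)
    (g : ℚ⟦X⟧) (hg : g * (3 + X + s) = 4)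
    (t : ℚ⟦X⟧) (ht0 : constantCoeff t = 1) (ht : t * (1 - X - 2 * X * t) = 1)
    (w : ℚ⟦X⟧) (hw0 : constantCoeff w = 1)
    (hw : w * (1 - 5 * X - 6 * X ^ 2 * w) = 1) :
    g * (1 - X * t) = 1 ∧ g * (1 - X - 3 * X ^ 2 * w) = 1 := by
  have h4 : (4 : ℚ⟦X⟧) ≠ 0 := by
    intro h
    have := congrArg (constantCoeff (R := ℚ)) h
    rw [map_ofNat] at this; norm_num at this
  have hst : s = 1 - X - 4 * X * t := by
    have hprod : (s - (1 - X - 4 * X * t)) * (s + (1 - X - 4 * X * t)) = 0 := by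
      linear_combination hs + 8 * X * ht
    rcases mul_eq_zero.mp hprod with h | h
    · exact sub_eq_zero.mp h
    · exfalso
      have := congrArg (constantCoeff (R := ℚ)) h
      simp [hs0, ht0] at this
  have hsw : s = 1 - 5 * X - 12 * X ^ 2 * w := by
    have hprod : (s - (1 - 5 * X - 12 * X ^ 2 * w)) *
        (s + (1 - 5 * X - 12 * X ^ 2 * w)) = 0 := by
      linear_combination hs + 24 * X ^ 2 * hw
    rcases mul_eq_zero.mp hprod with h | h
    · exact sub_eq_zero.mp h
    · exfalso
      have := congrArg (constantCoeff (R := ℚ)) h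
      simp [hs0, hw0] at this
  constructor
  · apply mul_left_cancel₀ h4
    calc 4 * (g * (1 - X * t)) = g * (3 + X + s) := by rw [hst]; ring
      _ = 4 * 1 := by rw [hg]; ring
  · apply mul_left_cancel₀ h4
    calc 4 * (g * (1 - X - 3 * X ^ 2 * w)) = g * (3 + X + s) := by rw [hsw]; ring
      _ = 4 * 1 := by rw [hg]; ring
end

section
/- Let N(X,Y) ∈ ℚ⟦X⟧⟦Y⟧ be the Narayana generating function, defined as the unique solution with N(0,Y)=1 of N = 1/(1 - (Y+1)X - Y X²·N). Then N also satisfies the Thron-type identity N = 1/(1 - X - Y X·z), where z is the unique power series with z(0,Y) = 1 satisfying z = 1/(1 + (Y-1)X - Y X·z). -/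
open PowerSeries

/-- The Narayana generating function `N`, the unique solution with constant term 1
of `N = 1/(1 - (Y+1)X - YX²·N)` (working in `R⟦X⟧` with `R = ℚ⟦Y⟧`, so `Y` is the
constant `C Y`), also satisfies the Thron-type identity `N = 1/(1 - X - YX·z)`,
where `z` is the unique series with constant term 1 satisfying
`z = 1/(1 + (Y-1)X - YX·z)`. -/
theorem narayana_thron (N z : PowerSeries (ℚ⟦X⟧))
    (hN0 : constantCoeff (R := ℚ⟦X⟧) N = 1)
    (hN : N * (1 - (PowerSeries.C (R := ℚ⟦X⟧) X + 1) * PowerSeries.X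
        - PowerSeries.C (R := ℚ⟦X⟧) X * PowerSeries.X ^ 2 * N) = 1)
    (hz0 : constantCoeff (R := ℚ⟦X⟧) z = 1)
    (hz : z * (1 + (PowerSeries.C (R := ℚ⟦X⟧) X - 1) * PowerSeries.X
        - PowerSeries.C (R := ℚ⟦X⟧) X * PowerSeries.X * z) = 1) :
    N * (1 - PowerSeries.X - PowerSeries.C (R := ℚ⟦X⟧) X * PowerSeries.X * z) = 1 := by
  set Y : PowerSeries (ℚ⟦X⟧) := PowerSeries.C (R := ℚ⟦X⟧) X with hY
  set w : PowerSeries (ℚ⟦X⟧) := 1 + PowerSeries.X * N with hw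
  -- w satisfies the same equation as z
  have hweq : w * (1 + (Y - 1) * PowerSeries.X - Y * PowerSeries.X * w) = 1 := by
    rw [hw]
    linear_combination PowerSeries.X * hN
  -- factor the difference
  have hfac : (z - w) * (1 + (Y - 1) * PowerSeries.X
      - Y * PowerSeries.X * (z + w)) = 0 := by
    linear_combination hz - hweq
  have hu : (1 + (Y - 1) * PowerSeries.X - Y * PowerSeries.X * (z + w)) ≠ 0 := by
    intro h
    have := congrArg (constantCoeff (R := ℚ⟦X⟧)) h
    simp [hY] at this
  have hzw : z = w := by
    rcases mul_eq_zero.mp hfac with h | h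
    · exact sub_eq_zero.mp h
    · exact absurd h hu
  rw [hzw, hw]
  linear_combination hN
end

section
/- The coefficient of X^n Y^k in the Narayana generating function N(X,Y) — the unique solution with constant term 1 of N = 1/(1 - (Y+1)X - Y X²·N) — equals the Narayana number (1/(k+1))·binomial(n,k)·binomial(n+1,k). -/
open PowerSeries Finset





namespace NarayanaAux

lemma hockey (p m : ℕ) : ∑ i ∈ range (m+1), i.choose p = (m+1).choose (p+1) := by
  induction m with
  | zero => cases p <;> simp [Nat.choose_eq_zero_of_lt]
  | succ m ih => rw [sum_range_succ, ih, Nat.choose_succ_succ (m+1) p, Nat.add_comm]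

lemma choose_conv (p m : ℕ) : ∀ q, ∑ i ∈ range (m+1), i.choose p * (m - i).choose q
    = (m+1).choose (p+q+1) := by
  induction m with
  | zero =>
      intro q
      cases q <;> cases p <;> simp [Nat.choose_succ_succ, Nat.choose_eq_zero_of_lt]
  | succ m ih =>
      intro q
      cases q with
      | zero =>
          simpa using hockey p (m+1)
      | succ q =>
          rw [sum_range_succ]
          have h1 : ∀ i ∈ range (m+1), i.choose p * (m + 1 - i).choose (q+1)
              = i.choose p * (m - i).choose q + i.choose p * (m - i).choose (q+1) := by
            intro i hi
            have : m + 1 - i = (m - i) + 1 := by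
              have := mem_range.mp hi; omega
            rw [this, Nat.choose_succ_succ, Nat.mul_add]
          rw [sum_congr rfl h1, sum_add_distrib, ih q, ih (q+1)]
          have : (m+1+1).choose (p+(q+1)+1) = (m+1).choose (p+q+1) + (m+1).choose (p+(q+1)+1) := by
            have h := Nat.choose_succ_succ (m+1) (p+q+1)
            simp only [Nat.succ_eq_add_one] at h
            have e : p+(q+1)+1 = (p+q+1)+1 := by ring
            rw [e]; omega
          rw [this]
          have e2 : p + (q+1) + 1 = p + q + 1 + 1 := by ring
          simp [e2, Nat.choose_eq_zero_of_lt]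

end NarayanaAux

namespace NarayanaAuxC

lemma triangle {M : Type*} [AddCommMonoid M] (n : ℕ) (f : ℕ → ℕ → M)
    (hf : ∀ j1 j2, n < j1 + j2 → f j1 j2 = 0) :
    ∑ j1 ∈ range (n+1), ∑ j2 ∈ range (n+1), f j1 j2
      = ∑ J ∈ range (n+1), ∑ j1 ∈ range (J+1), f j1 (J - j1) := by
  have step1 : ∀ J ∈ range (n+1), ∑ j1 ∈ range (J+1), f j1 (J - j1)
      = ∑ j1 ∈ range (n+1), (if j1 ≤ J then f j1 (J - j1) else 0) := by
    intro J hJ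
    have hJn : J ≤ n := by have := mem_range.mp hJ; omega
    have e0 : ∑ j1 ∈ range (J+1), f j1 (J - j1)
        = ∑ j1 ∈ range (J+1), (if j1 ≤ J then f j1 (J - j1) else 0) :=
      sum_congr rfl fun j1 hj1 =>
        (if_pos (by have := mem_range.mp hj1; omega)).symm
    rw [e0]
    apply sum_subset (range_subset_range.mpr (by omega))
    intro x _ hx
    have : J < x := by
      rcases lt_or_ge J x with h | h
      · exact h
      · exact absurd (mem_range.mpr (by omega)) hx
    rw [if_neg (by omega)]
  rw [sum_congr rfl step1]
  conv_rhs => rw [sum_comm]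
  apply sum_congr rfl
  intro j1 hj1
  have hj1n : j1 ≤ n := by have := mem_range.mp hj1; omega
  have split : ∑ J ∈ range (n+1), (if j1 ≤ J then f j1 (J - j1) else 0)
      = ∑ J ∈ Ico j1 (n+1), (if j1 ≤ J then f j1 (J - j1) else 0) := by
    rw [range_eq_Ico, ← Finset.sum_Ico_consecutive _ (Nat.zero_le j1) (by omega)]
    have hz : ∑ J ∈ Ico 0 j1, (if j1 ≤ J then f j1 (J - j1) else 0) = 0 := by
      apply sum_eq_zero
      intro x hx
      have := mem_Ico.mp hx
      rw [if_neg (by omega)]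
    rw [hz, zero_add]
  rw [split, sum_congr rfl (fun J hJ => if_pos (mem_Ico.mp hJ).1),
    Finset.sum_Ico_eq_sum_range]
  have e : ∀ i ∈ range (n+1-j1), f j1 (j1 + i - j1) = f j1 i := by
    intro i _; congr 1; omega
  rw [sum_congr rfl e]
  refine (sum_subset (range_subset_range.mpr (by omega)) ?_).symm
  intro x _ hx
  apply hf
  have : n + 1 - j1 ≤ x := by
    rcases le_or_gt (n+1-j1) x with h | h
    · exact h
    · exact absurd (mem_range.mpr (by omega)) hx
  omega

noncomputable def P (n : ℕ) : ℚ⟦X⟧ :=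
  ∑ j ∈ range (n+1),
    PowerSeries.C ((catalan j * n.choose (2*j) : ℕ) : ℚ) * (X^j * (1+X)^(n-2*j))

lemma coeff_one_add_X_pow (m k : ℕ) : coeff k ((1+X)^m) = (m.choose k : ℚ) := by
  rw [add_comm (1 : ℚ⟦X⟧) X, add_pow, map_sum]
  have e : ∀ i ∈ range (m+1), coeff k (X^i * 1^(m-i) * ((m.choose i : ℕ) : ℚ⟦X⟧))
      = if k = i then (m.choose i : ℚ) else 0 := by
    intro i _
    rw [one_pow, mul_one, ← map_natCast (PowerSeries.C (R := ℚ)) (m.choose i), coeff_mul_C,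
      coeff_X_pow]
    split <;> simp
  rw [sum_congr rfl e, sum_ite_eq (range (m+1)) k]
  split
  · rfl
  · rename_i h
    have : m < k := by
      rcases le_or_gt k m with h2 | h2
      · exact absurd (mem_range.mpr (by omega)) h
      · exact h2
    simp [Nat.choose_eq_zero_of_lt this]

lemma coeff_P (n k : ℕ) : coeff k (P n)
    = ∑ j ∈ range (k+1), (catalan j : ℚ) * (n.choose (2*j)) * ((n-2*j).choose (k-j)) := by
  rw [P, map_sum]
  have e : ∀ j ∈ range (n+1),
      coeff k (PowerSeries.C ((catalan j * n.choose (2*j) : ℕ) : ℚ) * (X^j * (1+X)^(n-2*j)))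
      = (catalan j : ℚ) * (n.choose (2*j)) *
          (if j ≤ k then (((n-2*j).choose (k-j) : ℕ) : ℚ) else 0) := by
    intro j _
    rw [coeff_C_mul, coeff_X_pow_mul' _ j k]
    split
    · rw [coeff_one_add_X_pow]; push_cast; ring
    · push_cast; ring
  rw [sum_congr rfl e]
  have common : ∀ N : ℕ, n ≤ N → k ≤ N →
      ∑ j ∈ range (n+1), (catalan j : ℚ) * (n.choose (2*j)) *
          (if j ≤ k then (((n-2*j).choose (k-j) : ℕ) : ℚ) else 0)
      = ∑ j ∈ range (N+1), (catalan j : ℚ) * (n.choose (2*j)) *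
          (if j ≤ k then (((n-2*j).choose (k-j) : ℕ) : ℚ) else 0) := by
    intro N hn hk
    apply sum_subset (range_subset_range.mpr (by omega))
    intro x _ hx
    have hxn : n < x := by
      rcases le_or_gt x n with h | h
      · exact absurd (mem_range.mpr (by omega)) hx
      · exact h
    have : n.choose (2*x) = 0 := Nat.choose_eq_zero_of_lt (by omega)
    simp [this]
  have common2 :
      ∑ j ∈ range (k+1), (catalan j : ℚ) * (n.choose (2*j)) * ((n-2*j).choose (k-j))
      = ∑ j ∈ range ((max n k)+1), (catalan j : ℚ) * (n.choose (2*j)) *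
          (if j ≤ k then (((n-2*j).choose (k-j) : ℕ) : ℚ) else 0) := by
    have e0 : ∑ j ∈ range (k+1), (catalan j : ℚ) * (n.choose (2*j)) * ((n-2*j).choose (k-j))
        = ∑ j ∈ range (k+1), (catalan j : ℚ) * (n.choose (2*j)) *
            (if j ≤ k then (((n-2*j).choose (k-j) : ℕ) : ℚ) else 0) :=
      sum_congr rfl fun j hj => by
        rw [if_pos (by have := mem_range.mp hj; omega : j ≤ k)]
    rw [e0]
    apply sum_subset (range_subset_range.mpr (by omega))
    intro x _ hx
    have hxk : k < x := by
      rcases le_or_gt x k with h | h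
      · exact absurd (mem_range.mpr (by omega)) hx
      · exact h
    rw [if_neg (by omega), mul_zero]
  rw [common (max n k) (le_max_left _ _) (le_max_right _ _), common2]


lemma P_ext (i N : ℕ) (h : i ≤ N) :
    P i = ∑ j ∈ range (N+1),
      PowerSeries.C ((catalan j * i.choose (2*j) : ℕ) : ℚ) * (X^j * (1+X)^(i-2*j)) := by
  rw [P]
  apply sum_subset (range_subset_range.mpr (by omega))
  intro x _ hx
  have hxi : i < x := by
    rcases le_or_gt x i with h2 | h2
    · exact absurd (mem_range.mpr (by omega)) hx
    · exact h2
  have : i.choose (2*x) = 0 := Nat.choose_eq_zero_of_lt (by omega)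
  simp [this]

lemma Pmul (n i : ℕ) (hi : i ≤ n) :
    P i * P (n-i) = ∑ j1 ∈ range (n+1), ∑ j2 ∈ range (n+1),
      PowerSeries.C ((catalan j1 * catalan j2 *
          (i.choose (2*j1) * (n-i).choose (2*j2)) : ℕ) : ℚ)
        * (X^(j1+j2) * (1+X)^(n-2*(j1+j2))) := by
  rw [P_ext i n hi, P_ext (n-i) n (by omega), sum_mul_sum]
  apply sum_congr rfl
  intro j1 _
  apply sum_congr rfl
  intro j2 _
  rcases le_or_gt (2*j1) i with h1 | h1
  · rcases le_or_gt (2*j2) (n-i) with h2 | h2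
    · have e : n - 2*(j1+j2) = (i - 2*j1) + ((n-i) - 2*j2) := by omega
      rw [e, pow_add]
      push_cast
      simp only [map_mul]
      ring
    · have hz : (n-i).choose (2*j2) = 0 := Nat.choose_eq_zero_of_lt h2
      simp [hz]
  · have hz : i.choose (2*j1) = 0 := Nat.choose_eq_zero_of_lt h1
    simp [hz]

lemma conv_eq (n : ℕ) :
    ∑ i ∈ range (n+1), P i * P (n-i)
      = ∑ J ∈ range (n+1),
          PowerSeries.C ((catalan (J+1) * (n+1).choose (2*J+1) : ℕ) : ℚ)
            * (X^J * (1+X)^(n-2*J)) := by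
  have h1 : ∀ i ∈ range (n+1), P i * P (n-i) = ∑ j1 ∈ range (n+1), ∑ j2 ∈ range (n+1),
      PowerSeries.C ((catalan j1 * catalan j2 *
          (i.choose (2*j1) * (n-i).choose (2*j2)) : ℕ) : ℚ)
        * (X^(j1+j2) * (1+X)^(n-2*(j1+j2))) := by
    intro i hi
    exact Pmul n i (by have := mem_range.mp hi; omega)
  rw [sum_congr rfl h1]
  rw [sum_comm]
  have h2 : ∀ j1 ∈ range (n+1), ∑ i ∈ range (n+1), ∑ j2 ∈ range (n+1),
      PowerSeries.C ((catalan j1 * catalan j2 *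
          (i.choose (2*j1) * (n-i).choose (2*j2)) : ℕ) : ℚ)
        * (X^(j1+j2) * (1+X)^(n-2*(j1+j2)))
      = ∑ j2 ∈ range (n+1),
          PowerSeries.C ((catalan j1 * catalan j2 * (n+1).choose (2*(j1+j2)+1) : ℕ) : ℚ)
            * (X^(j1+j2) * (1+X)^(n-2*(j1+j2))) := by
    intro j1 _
    rw [sum_comm]
    apply sum_congr rfl
    intro j2 _
    rw [← sum_mul, ← map_sum]
    congr 2
    push_cast
    rw [← mul_sum]
    have hcc : ∑ i ∈ range (n+1), (i.choose (2*j1) : ℚ) * ((n-i).choose (2*j2) : ℚ)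
        = ((n+1).choose (2*j1+2*j2+1) : ℚ) := by
      exact_mod_cast congrArg (Nat.cast (R := ℚ)) (NarayanaAux.choose_conv (2*j1) n (2*j2))
    rw [hcc]
    have e : 2*(j1+j2)+1 = 2*j1+2*j2+1 := by ring
    rw [e]
  rw [sum_congr rfl h2]
  have h3 := triangle n (fun j1 j2 =>
      PowerSeries.C ((catalan j1 * catalan j2 * (n+1).choose (2*(j1+j2)+1) : ℕ) : ℚ)
        * (X^(j1+j2) * (1+X)^(n-2*(j1+j2)))) ?_
  · rw [h3]
    apply sum_congr rfl
    intro J hJ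
    have hJn : J ≤ n := by have := mem_range.mp hJ; omega
    have h4 : ∀ j1 ∈ range (J+1),
        PowerSeries.C ((catalan j1 * catalan (J-j1) * (n+1).choose (2*(j1+(J-j1))+1) : ℕ) : ℚ)
          * (X^(j1+(J-j1)) * (1+X)^(n-2*(j1+(J-j1))))
        = PowerSeries.C ((catalan j1 * catalan (J-j1) * (n+1).choose (2*J+1) : ℕ) : ℚ)
          * (X^J * (1+X)^(n-2*J)) := by
      intro j1 hj1
      have : j1 + (J - j1) = J := by have := mem_range.mp hj1; omega
      rw [this]
    rw [sum_congr rfl h4, ← sum_mul, ← map_sum]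
    congr 2
    have hcat : ∑ j1 ∈ range (J+1), catalan j1 * catalan (J - j1) = catalan (J+1) := by
      rw [catalan_succ', Finset.Nat.sum_antidiagonal_eq_sum_range_succ_mk]
    push_cast
    rw [← sum_mul]
    have hq : (∑ j1 ∈ range (J+1), (catalan j1 : ℚ) * (catalan (J - j1) : ℚ))
        = (catalan (J+1) : ℚ) := by exact_mod_cast hcat
    rw [hq]
  · intro j1 j2 hgt
    have : (n+1).choose (2*(j1+j2)+1) = 0 := Nat.choose_eq_zero_of_lt (by omega)
    simp [this]

lemma Prec (n : ℕ) :
    P (n+2) = (1+X) * P (n+1) + X * ∑ i ∈ range (n+1), P i * P (n-i) := by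
  have hA : (1+X) * P (n+1) = ∑ j ∈ range (n+2),
      PowerSeries.C ((catalan j * (n+1).choose (2*j) : ℕ) : ℚ)
        * (X^j * (1+X)^(n+2-2*j)) := by
    rw [P, mul_sum]
    apply sum_congr rfl
    intro j _
    rcases le_or_gt (2*j) (n+1) with h | h
    · have e : (n+2-2*j) = (n+1-2*j) + 1 := by omega
      rw [e, pow_succ]
      ring
    · have hz : (n+1).choose (2*j) = 0 := Nat.choose_eq_zero_of_lt h
      simp [hz]
  have hB : X * ∑ i ∈ range (n+1), P i * P (n-i)
      = ∑ j ∈ range (n+2),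
          PowerSeries.C ((catalan (j+1) * (n+1).choose (2*j+1) : ℕ) : ℚ)
            * (X^(j+1) * (1+X)^(n-2*j)) := by
    rw [conv_eq, mul_sum]
    have h1 : ∀ j ∈ range (n+1),
        X * (PowerSeries.C ((catalan (j+1) * (n+1).choose (2*j+1) : ℕ) : ℚ)
            * (X^j * (1+X)^(n-2*j)))
        = PowerSeries.C ((catalan (j+1) * (n+1).choose (2*j+1) : ℕ) : ℚ)
            * (X^(j+1) * (1+X)^(n-2*j)) := by
      intro j _
      rw [pow_succ]
      ring
    rw [sum_congr rfl h1]
    apply sum_subset (range_subset_range.mpr (by omega))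
    intro x _ hx
    have hxn : n < x := by
      rcases le_or_gt x n with h2 | h2
      · exact absurd (mem_range.mpr (by omega)) hx
      · exact h2
    have hz : (n+1).choose (2*x+1) = 0 := Nat.choose_eq_zero_of_lt (by omega)
    simp [hz]
  rw [hA, hB, P, Finset.sum_range_succ' _ (n+2)]
  conv_rhs => rw [Finset.sum_range_succ' _ (n+1)]
  have haext : ∑ j ∈ range (n+1),
      PowerSeries.C ((catalan (j+1) * (n+1).choose (2*(j+1)) : ℕ) : ℚ)
        * (X^(j+1) * (1+X)^(n+2-2*(j+1)))
      = ∑ j ∈ range (n+2),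
      PowerSeries.C ((catalan (j+1) * (n+1).choose (2*(j+1)) : ℕ) : ℚ)
        * (X^(j+1) * (1+X)^(n+2-2*(j+1))) := by
    apply sum_subset (range_subset_range.mpr (by omega))
    intro x _ hx
    have hxn : n < x := by
      rcases le_or_gt x n with h2 | h2
      · exact absurd (mem_range.mpr (by omega)) hx
      · exact h2
    have hz : (n+1).choose (2*(x+1)) = 0 := Nat.choose_eq_zero_of_lt (by omega)
    simp [hz]
  rw [haext]
  have hsplit : ∀ j ∈ range (n+2),
      PowerSeries.C ((catalan (j+1) * (n+2).choose (2*(j+1)) : ℕ) : ℚ)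
        * (X^(j+1) * (1+X)^(n+2-2*(j+1)))
      = PowerSeries.C ((catalan (j+1) * (n+1).choose (2*(j+1)) : ℕ) : ℚ)
          * (X^(j+1) * (1+X)^(n+2-2*(j+1)))
        + PowerSeries.C ((catalan (j+1) * (n+1).choose (2*j+1) : ℕ) : ℚ)
          * (X^(j+1) * (1+X)^(n-2*j)) := by
    intro j _
    have e2 : n+2-2*(j+1) = n-2*j := by omega
    have ep : (n+2).choose (2*(j+1)) = (n+1).choose (2*j+1) + (n+1).choose (2*(j+1)) := by
      have e3 : 2*(j+1) = (2*j+1)+1 := by ring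
      rw [e3, Nat.choose_succ_succ]
    rw [e2, ep]
    push_cast [mul_add]
    rw [map_add]
    ring
  rw [sum_congr rfl hsplit, sum_add_distrib]
  have h00 : (PowerSeries.C ((catalan 0 * (n+2).choose (2*0) : ℕ) : ℚ)
        * (X^0 * (1+X)^(n+2-2*0)) : ℚ⟦X⟧)
      = PowerSeries.C ((catalan 0 * (n+1).choose (2*0) : ℕ) : ℚ)
        * (X^0 * (1+X)^(n+2-2*0)) := by
    norm_num
  rw [h00]
  ring




end NarayanaAuxC

namespace NarayanaAuxB

lemma vand2 (s t : ℕ) :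
    ∑ j ∈ range (s+t+1), s.choose (j+1) * t.choose j = (s+t).choose (t+1) := by
  have h1 : ∑ j ∈ range (t+1), s.choose (j+1) * t.choose j
      = ∑ j ∈ range (s+t+1), s.choose (j+1) * t.choose j := by
    apply sum_subset
    · exact range_subset_range.mpr (by omega)
    · intro x _ hx
      have hx' : t < x := by
        rcases lt_or_ge t x with h | h
        · exact h
        · exact absurd (mem_range.mpr (by omega)) hx
      simp [Nat.choose_eq_zero_of_lt hx']
  rw [← h1, Nat.add_choose_eq, Finset.Nat.sum_antidiagonal_eq_sum_range_succ_mk,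
    Finset.sum_range_succ' _ (t+1)]
  have h0 : s.choose 0 * t.choose (t+1-0) = 0 := by
    simp [Nat.choose_eq_zero_of_lt (Nat.lt_succ_self t)]
  rw [h0, add_zero]
  apply sum_congr rfl
  intro j hj
  have hj' : j ≤ t := by have := mem_range.mp hj; omega
  have he : t + 1 - (j+1) = t - j := by omega
  rw [he, Nat.choose_symm hj']

lemma mult (n k j : ℕ) (hjk : j ≤ k) :
    ((2*j).choose j : ℚ) * (n.choose (2*j)) * ((n-2*j).choose (k-j))
    = (n.choose k) * (k.choose j) * ((n-k).choose j) := by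
  rcases le_or_gt (2*j) n with h2j | h2j
  · rcases le_or_gt (k + j) n with hkj | hkj
    · -- main case: j ≤ k, 2j ≤ n, k + j ≤ n
      have hkn : k ≤ n := by omega
      have hkj2 : k - j ≤ n - 2*j := by omega
      have hjnk : j ≤ n - k := by omega
      rw [Nat.cast_choose ℚ (by omega : j ≤ 2*j), Nat.cast_choose ℚ h2j,
        Nat.cast_choose ℚ hkj2, Nat.cast_choose ℚ hkn, Nat.cast_choose ℚ hjk,
        Nat.cast_choose ℚ hjnk]
      have e1 : 2*j - j = j := by omega
      have e2 : n - 2*j - (k - j) = n - k - j := by omega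
      have e3 : (n - k) - j = n - k - j := rfl
      rw [e1, e2, e3]
      have f0 : (Nat.factorial j : ℚ) ≠ 0 := by exact_mod_cast (Nat.factorial_pos j).ne'
      have f1 : (Nat.factorial (2*j) : ℚ) ≠ 0 := by exact_mod_cast (Nat.factorial_pos _).ne'
      have f2 : (Nat.factorial (n-2*j) : ℚ) ≠ 0 := by exact_mod_cast (Nat.factorial_pos _).ne'
      have f3 : (Nat.factorial (k-j) : ℚ) ≠ 0 := by exact_mod_cast (Nat.factorial_pos _).ne'
      have f4 : (Nat.factorial (n-k-j) : ℚ) ≠ 0 := by exact_mod_cast (Nat.factorial_pos _).ne'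
      have f5 : (Nat.factorial k : ℚ) ≠ 0 := by exact_mod_cast (Nat.factorial_pos _).ne'
      have f6 : (Nat.factorial (n-k) : ℚ) ≠ 0 := by exact_mod_cast (Nat.factorial_pos _).ne'
      field_simp
    · -- k + j > n : RHS has (n-k).choose j = 0 (if k ≤ n) or n.choose k = 0
      have hL : ((n-2*j).choose (k-j) : ℚ) = 0 := by
        have : n - 2*j < k - j := by omega
        exact_mod_cast congrArg (Nat.cast (R := ℚ)) (Nat.choose_eq_zero_of_lt this)
      rcases le_or_gt k n with hkn | hkn
      · have hR : ((n-k).choose j : ℚ) = 0 := by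
          have : n - k < j := by omega
          exact_mod_cast congrArg (Nat.cast (R := ℚ)) (Nat.choose_eq_zero_of_lt this)
        rw [hL, hR]; ring
      · have hR : (n.choose k : ℚ) = 0 := by
          exact_mod_cast congrArg (Nat.cast (R := ℚ)) (Nat.choose_eq_zero_of_lt hkn)
        rw [hL, hR]; ring
  · -- 2j > n
    have hL : (n.choose (2*j) : ℚ) = 0 := by
      exact_mod_cast congrArg (Nat.cast (R := ℚ)) (Nat.choose_eq_zero_of_lt h2j)
    rcases le_or_gt k n with hkn | hkn
    · have hR : ((n-k).choose j : ℚ) = 0 := by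
        have : n - k < j := by omega
        exact_mod_cast congrArg (Nat.cast (R := ℚ)) (Nat.choose_eq_zero_of_lt this)
      rw [hL, hR]; ring
    · have hR : (n.choose k : ℚ) = 0 := by
        exact_mod_cast congrArg (Nat.cast (R := ℚ)) (Nat.choose_eq_zero_of_lt hkn)
      rw [hL, hR]; ring

lemma touchard (n k : ℕ) :
    ((k:ℚ)+1) * ∑ j ∈ range (k+1),
        (catalan j : ℚ) * (n.choose (2*j)) * ((n-2*j).choose (k-j))
      = (n.choose k) * ((n+1).choose k) := by
  rcases le_or_gt k n with hkn | hkn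
  · rw [mul_sum]
    have hterm : ∀ j ∈ range (k+1),
        ((k:ℚ)+1) * ((catalan j : ℚ) * (n.choose (2*j)) * ((n-2*j).choose (k-j)))
        = (n.choose k) * (((k+1).choose (j+1) : ℚ) * ((n-k).choose j)) := by
      intro j hj
      have hjk : j ≤ k := by have := mem_range.mp hj; omega
      have hj1 : ((j:ℚ)+1) ≠ 0 := by positivity
      apply mul_left_cancel₀ hj1
      have hc : ((j:ℚ)+1) * (catalan j : ℚ) = ((2*j).choose j : ℚ) := by
        have := succ_mul_catalan_eq_centralBinom j
        have h2 : Nat.centralBinom j = (2*j).choose j := rfl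
        rw [h2] at this
        exact_mod_cast this
      have hch : ((j:ℚ)+1) * ((k+1).choose (j+1) : ℚ) = ((k:ℚ)+1) * (k.choose j : ℚ) := by
        have hn : (k+1) * k.choose j = (k+1).choose (j+1) * (j+1) :=
          Nat.add_one_mul_choose_eq k j
        have hq := congrArg (Nat.cast (R := ℚ)) hn
        push_cast at hq
        linear_combination -hq
      calc ((j:ℚ)+1) * (((k:ℚ)+1) * ((catalan j : ℚ) * (n.choose (2*j)) * ((n-2*j).choose (k-j))))
          = ((k:ℚ)+1) * ((((j:ℚ)+1) * (catalan j : ℚ)) * (n.choose (2*j)) * ((n-2*j).choose (k-j))) := by ring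
        _ = ((k:ℚ)+1) * (((2*j).choose j : ℚ) * (n.choose (2*j)) * ((n-2*j).choose (k-j))) := by rw [hc]
        _ = ((k:ℚ)+1) * ((n.choose k) * (k.choose j) * ((n-k).choose j)) := by rw [mult n k j hjk]
        _ = (n.choose k) * ((((k:ℚ)+1) * (k.choose j : ℚ)) * ((n-k).choose j)) := by ring
        _ = (n.choose k) * ((((j:ℚ)+1) * ((k+1).choose (j+1) : ℚ)) * ((n-k).choose j)) := by rw [hch]
        _ = ((j:ℚ)+1) * ((n.choose k) * (((k+1).choose (j+1) : ℚ) * ((n-k).choose j))) := by ring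
    rw [sum_congr rfl hterm, ← mul_sum]
    have hext : ∑ j ∈ range (k+1), (((k+1).choose (j+1) : ℚ) * ((n-k).choose j))
        = ∑ j ∈ range ((k+1)+(n-k)+1), (((k+1).choose (j+1) : ℚ) * ((n-k).choose j)) := by
      apply sum_subset
      · exact range_subset_range.mpr (by omega)
      · intro x _ hx
        have hx' : k < x := by
          rcases lt_or_ge k x with h | h
          · exact h
          · exact absurd (mem_range.mpr (by omega)) hx
        have : (k+1).choose (x+1) = 0 := Nat.choose_eq_zero_of_lt (by omega)
        simp [this]
    rw [hext]
    have hv : ∑ j ∈ range ((k+1)+(n-k)+1), (((k+1).choose (j+1) : ℚ) * ((n-k).choose j))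
        = (((k+1)+(n-k)).choose ((n-k)+1) : ℚ) := by
      exact_mod_cast congrArg (Nat.cast (R := ℚ)) (vand2 (k+1) (n-k))
    rw [hv]
    have e : (k+1)+(n-k) = n+1 := by omega
    rw [e]
    have : (n+1).choose ((n-k)+1) = (n+1).choose k :=
      Nat.choose_symm_of_eq_add (by omega)
    rw [this]
  · -- k > n : both sides zero
    have hz : ∀ j ∈ range (k+1),
        (catalan j : ℚ) * (n.choose (2*j)) * ((n-2*j).choose (k-j)) = 0 := by
      intro j hj
      have hjk : j ≤ k := by have := mem_range.mp hj; omega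
      rcases le_or_gt (2*j) n with h | h
      · have : n - 2*j < k - j := by omega
        simp [Nat.choose_eq_zero_of_lt this]
      · simp [Nat.choose_eq_zero_of_lt h]
    rw [sum_congr rfl hz]
    simp [Nat.choose_eq_zero_of_lt hkn]

end NarayanaAuxB

namespace NarayanaAuxC

lemma P_zero : P 0 = 1 := by
  simp [P]

lemma P_one : P 1 = 1 + X := by
  norm_num [P, sum_range_succ]

noncomputable def M : PowerSeries (ℚ⟦X⟧) := PowerSeries.mk fun n => P n

lemma coeff_MM (n : ℕ) : coeff n (M * M) = ∑ i ∈ range (n+1), P i * P (n-i) := by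
  rw [coeff_mul, Finset.Nat.sum_antidiagonal_eq_sum_range_succ_mk]
  exact sum_congr rfl fun i _ => by rw [M, coeff_mk, coeff_mk]

lemma M_eq : M = 1 + (PowerSeries.C (X : ℚ⟦X⟧) + 1) * PowerSeries.X * M
    + PowerSeries.C (X : ℚ⟦X⟧) * PowerSeries.X ^ 2 * (M * M) := by
  have e1 : (PowerSeries.C (X : ℚ⟦X⟧) + 1) * PowerSeries.X * M
      = PowerSeries.C (X : ℚ⟦X⟧) * (PowerSeries.X * M) + PowerSeries.X * M := by ring
  have e2 : PowerSeries.C (X : ℚ⟦X⟧) * PowerSeries.X ^ 2 * (M * M)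
      = PowerSeries.C (X : ℚ⟦X⟧) * (PowerSeries.X ^ 2 * (M * M)) := by ring
  apply PowerSeries.ext
  intro n
  rw [e1, e2, map_add, map_add, map_add, coeff_C_mul, coeff_C_mul]
  match n with
  | 0 =>
      rw [M, coeff_mk, P_zero]
      simp
  | 1 =>
      rw [M, coeff_mk, P_one, coeff_one, coeff_succ_X_mul, coeff_mk, P_zero,
        coeff_X_pow_mul']
      norm_num
      rw [add_comm (X : ℚ⟦X⟧) 1]
  | (n+2) =>
      rw [M, coeff_mk, coeff_one, coeff_succ_X_mul, coeff_mk]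
      have h2 : coeff (n+2) (PowerSeries.X ^ 2 * ((PowerSeries.mk fun n => P n) * (PowerSeries.mk fun n => P n)))
          = ∑ i ∈ range (n+1), P i * P (n-i) := by
        rw [show n + 2 = n + 2 from rfl, PowerSeries.coeff_X_pow_mul _ 2 n]
        exact coeff_MM n
      rw [h2, Prec n]
      norm_num
      ring


end NarayanaAuxC

/-- The coefficient of `X^n Y^k` in the Narayana generating function — the unique
solution with constant term 1 of `N = 1/(1 - (Y+1)X - YX²·N)`, working in `R⟦X⟧`
with `R = ℚ⟦Y⟧` — equals the Narayana number `(1/(k+1))·C(n,k)·C(n+1,k)`. -/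
theorem narayana_coefficients (N : PowerSeries (ℚ⟦X⟧))
    (hN0 : constantCoeff N = 1)
    (hN : N * (1 - (PowerSeries.C (X : ℚ⟦X⟧) + 1) * PowerSeries.X
        - PowerSeries.C (X : ℚ⟦X⟧) * PowerSeries.X ^ 2 * N) = 1) :
    ∀ n k : ℕ, coeff k (coeff n N) =
      (Nat.choose n k : ℚ) * (Nat.choose (n + 1) k : ℚ) / (k + 1) := by
  have hMeq : NarayanaAuxC.M * (1 - (PowerSeries.C (X : ℚ⟦X⟧) + 1) * PowerSeries.X
      - PowerSeries.C (X : ℚ⟦X⟧) * PowerSeries.X ^ 2 * NarayanaAuxC.M) = 1 := by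
    linear_combination NarayanaAuxC.M_eq
  have hfac : (N - NarayanaAuxC.M) * (1 - (PowerSeries.C (X : ℚ⟦X⟧) + 1) * PowerSeries.X
      - PowerSeries.C (X : ℚ⟦X⟧) * PowerSeries.X ^ 2 * (N + NarayanaAuxC.M)) = 0 := by
    linear_combination hN - hMeq
  have hNM : N = NarayanaAuxC.M := by
    rcases mul_eq_zero.mp hfac with h | h
    · exact sub_eq_zero.mp h
    · exfalso
      have := congrArg constantCoeff h
      simp [map_sub, map_mul, map_add] at this
  intro n k
  rw [hNM, NarayanaAuxC.M, PowerSeries.coeff_mk, NarayanaAuxC.coeff_P]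
  rw [eq_div_iff (by positivity : ((k:ℚ) + 1) ≠ 0)]
  linear_combination NarayanaAuxB.touchard n k
end

section
/- Let Q(X,Y) be the unique series with Q(0)=1 satisfying Q·(1 - (Y+2)X - (Y+1)X²·Q) = 1, and let s(X,Y) be the unique series with s(0)=1 satisfying s·(1 + YX - (Y+1)X·s) = 1. Then Q equals the unique solution R of the Thron-type equation R = 1/(1 - X - (Y+1)X·s). -/
open PowerSeries

/-- In `R⟦X⟧` with `R = ℚ⟦Y⟧`: the Jacobi continued fraction `Q`, the unique series
with constant term 1 satisfying `Q = 1/(1 - (Y+2)X - (Y+1)X²·Q)` (generating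
function of Schröder paths with `k` peaks and no peaks at level one), equals the
Thron-type fraction `1/(1 - X - (Y+1)X·s)` where `s` is the unique series with
constant term 1 satisfying `s = 1/(1 + YX - (Y+1)X·s)`. -/
theorem narayana_binomial_thron (Q s : PowerSeries (ℚ⟦X⟧))
    (hQ0 : constantCoeff (R := ℚ⟦X⟧) Q = 1)
    (hQ : Q * (1 - (PowerSeries.C (R := ℚ⟦X⟧) X + 2) * PowerSeries.X
        - (PowerSeries.C (R := ℚ⟦X⟧) X + 1) * PowerSeries.X ^ 2 * Q) = 1)
    (hs0 : constantCoeff (R := ℚ⟦X⟧) s = 1)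
    (hs : s * (1 + PowerSeries.C (R := ℚ⟦X⟧) X * PowerSeries.X
        - (PowerSeries.C (R := ℚ⟦X⟧) X + 1) * PowerSeries.X * s) = 1) :
    Q * (1 - PowerSeries.X - (PowerSeries.C (R := ℚ⟦X⟧) X + 1) * PowerSeries.X * s) = 1 := by
  set Y := PowerSeries.C (R := ℚ⟦X⟧) X with hY
  set c := Y + 1 with hc
  set A : PowerSeries (ℚ⟦X⟧) := 1 - PowerSeries.X - c * PowerSeries.X * s with hA
  have hkey : A ^ 2 = (1 - (Y + 2) * PowerSeries.X) * A - c * PowerSeries.X ^ 2 := by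
    rw [hA]
    linear_combination (-(c * PowerSeries.X)) * hs
  have hfac : (Q * A - 1) * (A - c * PowerSeries.X ^ 2 * Q) = 0 := by
    linear_combination Q * hkey + A * hQ
  have hne : (A - c * PowerSeries.X ^ 2 * Q) ≠ 0 := by
    intro h
    have h0 : constantCoeff (R := ℚ⟦X⟧) (A - c * PowerSeries.X ^ 2 * Q) = 1 := by
      simp [hA, mul_assoc]
    rw [h] at h0
    simp at h0
  rcases mul_eq_zero.mp hfac with h | h
  · linear_combination h
  · exact absurd h hne
end
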